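/- arXiv:1201.5771 — 9 statements merged into one kernel-verified Lean document; each statement's English description precedes it below -/
import Mathlib

section
/- For all m ∈ ℕ and k ∈ ℝ with −n ≤ k and −n < k + m ≤ 0, every function ψ in P_{k,m,0} is in the image of the Euclidean Dirac operator of the space Σ_{j=1}^{⌊(m+1)/2⌋} P_{k+2j, m+1−2j, 0} + Σ_{j=0}^{⌊m/2⌋} P_{k+2j, m−2j, 1}; i.e. there exists φ in that sum of spaces, differentiable on ℝⁿ ∖ {0}, with Dφ(x) = ψ(x) for all x ≠ 0. -/
noncomputable section

open MeasureTheory Finset CliffordAlgebra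

/-- The Euclidean Dirac operator of a spinor-valued function:
`Dψ(x) = ∑ i, e_i · (fderiv ℝ ψ x (e_i))`, where `e_i` is the standard
orthonormal basis and `·` is Clifford multiplication. -/
def diracOp {n : ℕ} (Q : QuadraticForm ℝ (EuclideanSpace ℝ (Fin n)))
    {W : Type*} [NormedAddCommGroup W] [NormedSpace ℂ W]
    [Module (CliffordAlgebra Q) W] [IsScalarTower ℝ (CliffordAlgebra Q) W]
    (ψ : EuclideanSpace ℝ (Fin n) → W) (x : EuclideanSpace ℝ (Fin n)) : W :=
  ∑ i : Fin n,
    (CliffordAlgebra.ι Q (EuclideanSpace.single i (1 : ℝ))) •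
      (fderiv ℝ ψ x (EuclideanSpace.single i (1 : ℝ)))

/-- The spaces `P_{k,m,t}` of spinor-valued functions on `ℝⁿ ∖ {0}`:
for `k ≠ 0`, the ℂ-span of `x ↦ x_{i_1}⋯x_{i_m}‖x‖^k γ` (t = 0) resp.
`x ↦ x_{i_1}⋯x_{i_m}‖x‖^k (x·γ)` (t = 1); for `k = 0`, the ℂ-span of
`x ↦ x_{i_1}⋯x_{i_m} ln‖x‖ γ` (t = 0) resp.
`x ↦ x_{i_1}⋯x_{i_m}(1 - n·ln‖x‖)(x·γ)` (t = 1). -/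
def Pspace {n : ℕ} (Q : QuadraticForm ℝ (EuclideanSpace ℝ (Fin n)))
    (W : Type*) [NormedAddCommGroup W] [NormedSpace ℂ W]
    [Module (CliffordAlgebra Q) W] [IsScalarTower ℝ (CliffordAlgebra Q) W]
    (k : ℝ) (m : ℕ) (t : ℕ) : Submodule ℂ (EuclideanSpace ℝ (Fin n) → W) :=
  Submodule.span ℂ
    {f | ∃ (idx : Fin m → Fin n) (γ : W), ∀ x : EuclideanSpace ℝ (Fin n),
      f x = ((∏ j, x (idx j)) *
          (if k = 0 then (if t = 0 then Real.log ‖x‖ else 1 - n * Real.log ‖x‖)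
           else ‖x‖ ^ k)) •
        (if t = 0 then γ else (CliffordAlgebra.ι Q x) • γ)}

set_option linter.unusedSectionVars false

namespace PDirac

variable {n : ℕ} {Q : QuadraticForm ℝ (EuclideanSpace ℝ (Fin n))}
  {W : Type*} [NormedAddCommGroup W] [NormedSpace ℂ W]
  [Module (CliffordAlgebra Q) W] [IsScalarTower ℝ (CliffordAlgebra Q) W]
  [SMulCommClass ℂ (CliffordAlgebra Q) W]

local notation "E" => EuclideanSpace ℝ (Fin n)

def sgl (i : Fin n) : EuclideanSpace ℝ (Fin n) := EuclideanSpace.single i (1 : ℝ)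

lemma cl_real_comm (c : CliffordAlgebra Q) (r : ℝ) (w : W) : c • r • w = r • c • w :=
  (smul_comm r c w).symm

lemma cl_sq (hQ : ∀ v : E, Q v = -‖v‖ ^ 2) (v : E) (w : W) :
    ι Q v • ι Q v • w = -(‖v‖ ^ 2 • w) := by
  rw [smul_smul, ι_sq_scalar, algebraMap_smul, hQ, neg_smul]

lemma polar_eq (hQ : ∀ v : E, Q v = -‖v‖ ^ 2) (a b : E) :
    QuadraticMap.polar Q a b = -(2 * (inner ℝ a b)) := by
  simp only [QuadraticMap.polar, hQ, @norm_add_sq_real]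
  ring

lemma cl_swap (hQ : ∀ v : E, Q v = -‖v‖ ^ 2) (a b : E) (w : W) :
    ι Q a • ι Q b • w = -(ι Q b • ι Q a • w) - (2 * (inner ℝ a b)) • w := by
  have h : (ι Q a * ι Q b) • w + (ι Q b * ι Q a) • w = (-(2 * (inner ℝ a b))) • w := by
    rw [← add_smul, ι_mul_ι_add_swap, algebraMap_smul, polar_eq hQ]
  rw [mul_smul, mul_smul] at h
  rw [eq_sub_of_add_eq h, neg_smul]
  abel

lemma cl_sum_sq (hQ : ∀ v : E, Q v = -‖v‖ ^ 2) (w : W) :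
    ∑ i : Fin n, ι Q (sgl i) • ι Q (sgl i) • w = -((n : ℝ) • w) := by
  have h : ∀ i : Fin n, ι Q (sgl i) • ι Q (sgl i) • w = -w := by
    intro i
    rw [cl_sq hQ]
    simp [sgl]
  rw [Finset.sum_congr rfl fun i _ => h i, Finset.sum_const, card_univ, Fintype.card_fin,
    smul_neg, Nat.cast_smul_eq_nsmul ℝ n w]

lemma cl_decomp (v : E) (w : W) :
    ∑ i, v i • (ι Q (sgl i) • w) = ι Q v • w := by
  have hv : ∑ i, v i • (sgl i : E) = v := by
    have h := (EuclideanSpace.basisFun (Fin n) ℝ).sum_repr v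
    simpa [EuclideanSpace.basisFun_apply, EuclideanSpace.basisFun_repr, sgl] using h
  calc ∑ i, v i • (ι Q (sgl i) • w) = ∑ i, (v i • ι Q (sgl i)) • w := by
        simp only [smul_assoc]
    _ = (∑ i, v i • ι Q (sgl i)) • w := by rw [← Finset.sum_smul]
    _ = (ι Q (∑ i, v i • (sgl i : E))) • w := by simp only [map_sum, _root_.map_smul]
    _ = ι Q v • w := by rw [hv]

lemma inner_sgl_left (i : Fin n) (v : E) : (inner ℝ (sgl i) v) = v i := by
  simp [sgl, EuclideanSpace.inner_single_left]

lemma inner_sgl_right (i : Fin n) (v : E) : (inner ℝ v (sgl i)) = v i := by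
  simp [sgl, EuclideanSpace.inner_single_right]

lemma sum_coord_sq (x : E) : ∑ i, x i * x i = ‖x‖ ^ 2 := by
  have h := @real_inner_self_eq_norm_sq (EuclideanSpace ℝ (Fin n)) _ _ x
  rw [PiLp.inner_apply] at h
  simp only [← pow_two]
  simpa using h

variable {m : ℕ}

def monoD (idx : Fin m → Fin n) (x : E) : EuclideanSpace ℝ (Fin n) →L[ℝ] ℝ :=
  ∑ j, (∏ l ∈ univ.erase j, x (idx l)) •
    (EuclideanSpace.proj (idx j) : EuclideanSpace ℝ (Fin n) →L[ℝ] ℝ)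

lemma hasFDerivAt_mono (idx : Fin m → Fin n) (x : E) :
    HasFDerivAt (fun y : E => ∏ j, y (idx j)) (monoD idx x) x := by
  have h := HasFDerivAt.finset_prod (𝕜 := ℝ) (𝔸' := ℝ)
    (u := (univ : Finset (Fin m))) (g := fun j (y : E) => y (idx j))
    (g' := fun j => (EuclideanSpace.proj (idx j) : EuclideanSpace ℝ (Fin n) →L[ℝ] ℝ))
    (x := x) (fun j _ => by
      exact (EuclideanSpace.proj (idx j) : EuclideanSpace ℝ (Fin n) →L[ℝ] ℝ).hasFDerivAt)
  exact h

lemma monoD_apply (idx : Fin m → Fin n) (x u : E) :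
    monoD idx x u = ∑ j, (∏ l ∈ univ.erase j, x (idx l)) * u (idx j) := by
  simp [monoD]

lemma sum_monoD_smul {M : Type*} [AddCommMonoid M] [Module ℝ M]
    (idx : Fin m → Fin n) (x : E) (T : Fin n → M) :
    ∑ i, monoD idx x (sgl i) • T i
      = ∑ j, (∏ l ∈ univ.erase j, x (idx l)) • T (idx j) := by
  simp only [monoD_apply, sgl, EuclideanSpace.single_apply]
  simp only [Finset.sum_smul]
  rw [Finset.sum_comm]
  refine Finset.sum_congr rfl fun j _ => ?_
  simp [mul_ite, ite_smul, Finset.sum_ite_eq]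

lemma euler (idx : Fin m → Fin n) (x : E) :
    ∑ i, monoD idx x (sgl i) * x i = (m : ℝ) * ∏ j, x (idx j) := by
  have h := sum_monoD_smul (M := ℝ) idx x (fun i => x i)
  simp only [smul_eq_mul] at h
  rw [h, Finset.sum_congr rfl fun j _ =>
    Finset.prod_erase_mul univ (fun l => x (idx l)) (mem_univ j),
    Finset.sum_const, card_univ, Fintype.card_fin, nsmul_eq_mul]

lemma hasFDerivAt_normSq (x : E) :
    HasFDerivAt (fun y : E => ‖y‖ ^ 2) (2 • (innerSL ℝ x : E →L[ℝ] ℝ)) x := by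
  simpa using (hasFDerivAt_id x).norm_sq

lemma norm_pow_eq (x : E) (k : ℝ) : ‖x‖ ^ k = ((‖x‖ ^ 2 : ℝ)) ^ (k / 2) := by
  rw [← Real.rpow_natCast ‖x‖ 2, ← Real.rpow_mul (norm_nonneg x)]
  congr 1
  ring

lemma hasFDerivAt_rpow_norm (k : ℝ) {x : E} (hx : x ≠ 0) :
    HasFDerivAt (fun y : E => ‖y‖ ^ k)
      ((k * ‖x‖ ^ (k - 2)) • (innerSL ℝ x : E →L[ℝ] ℝ)) x := by
  have hpos : (0 : ℝ) < ‖x‖ := norm_pos_iff.mpr hx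
  have h2 : (0 : ℝ) < ‖x‖ ^ 2 := by positivity
  have heq : (fun y : E => ‖y‖ ^ k) = fun y : E => ((‖y‖ ^ 2 : ℝ)) ^ (k / 2) :=
    funext fun y => norm_pow_eq y k
  rw [heq]
  have hd : HasDerivAt (fun t : ℝ => t ^ (k / 2)) ((k / 2) * (‖x‖ ^ 2) ^ (k / 2 - 1)) (‖x‖ ^ 2) :=
    Real.hasDerivAt_rpow_const (Or.inl (ne_of_gt h2))
  have h := hd.comp_hasFDerivAt x (hasFDerivAt_normSq x)
  refine h.congr_fderiv ?_
  have hpow : ((‖x‖ ^ 2 : ℝ)) ^ (k / 2 - 1) = ‖x‖ ^ (k - 2) := by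
    rw [← Real.rpow_natCast ‖x‖ 2, ← Real.rpow_mul hpos.le]
    congr 1
    push_cast
    ring
  ext u
  simp [hpow, smul_smul]
  ring

lemma hasFDerivAt_log_norm {x : E} (hx : x ≠ 0) :
    HasFDerivAt (fun y : E => Real.log ‖y‖)
      (((‖x‖ ^ 2 : ℝ)⁻¹) • (innerSL ℝ x : E →L[ℝ] ℝ)) x := by
  have hpos : (0 : ℝ) < ‖x‖ := norm_pos_iff.mpr hx
  have h2 : (0 : ℝ) < ‖x‖ ^ 2 := by positivity
  have heq : (fun y : E => Real.log ‖y‖) = fun y : E => (2⁻¹ : ℝ) * Real.log (‖y‖ ^ 2) := by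
    funext y
    rw [Real.log_pow]
    push_cast
    ring
  rw [heq]
  have hd : HasDerivAt Real.log (‖x‖ ^ 2)⁻¹ (‖x‖ ^ 2) := Real.hasDerivAt_log (ne_of_gt h2)
  have h := (hd.comp_hasFDerivAt x (hasFDerivAt_normSq x)).const_mul (2⁻¹ : ℝ)
  refine h.congr_fderiv ?_
  ext u
  simp [smul_smul]
  ring

def iotaSmul (Q : QuadraticForm ℝ (EuclideanSpace ℝ (Fin n)))
    [Module (CliffordAlgebra Q) W] [IsScalarTower ℝ (CliffordAlgebra Q) W]
    (γ : W) : EuclideanSpace ℝ (Fin n) →L[ℝ] W :=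
  LinearMap.toContinuousLinearMap
  { toFun := fun v => ι Q v • γ
    map_add' := fun a b => by
      show ι Q (a + b) • γ = ι Q a • γ + ι Q b • γ
      rw [map_add, add_smul]
    map_smul' := fun r a => by
      show ι Q (r • a) • γ = r • (ι Q a • γ)
      rw [_root_.map_smul, smul_assoc] }

@[simp] lemma iotaSmul_apply (γ : W) (v : E) : iotaSmul Q γ v = ι Q v • γ := rfl

lemma diracOp_eval {φ : E → W} {φ' : EuclideanSpace ℝ (Fin n) →L[ℝ] W} {x : E}
    (h : HasFDerivAt φ φ' x) :
    diracOp Q φ x = ∑ i, ι Q (sgl i) • φ' (sgl i) := by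
  rw [diracOp, h.fderiv]
  rfl

lemma dirac_smul_const {f : E → ℝ} {f' : EuclideanSpace ℝ (Fin n) →L[ℝ] ℝ} {x : E}
    (h : HasFDerivAt f f' x) (γ : W) :
    diracOp Q (fun y => f y • γ) x = ∑ i, f' (sgl i) • (ι Q (sgl i) • γ) := by
  rw [diracOp_eval (h.smul_const γ)]
  simp [cl_real_comm]

lemma dirac_smul_iota (hQ : ∀ v : E, Q v = -‖v‖ ^ 2)
    {f : E → ℝ} {f' : EuclideanSpace ℝ (Fin n) →L[ℝ] ℝ} {x : E}
    (h : HasFDerivAt f f' x) (γ : W) :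
    diracOp Q (fun y => f y • (ι Q y • γ)) x
      = (-((n : ℝ) * f x) - 2 * ∑ i, f' (sgl i) * x i) • γ
        - ι Q x • (∑ i, f' (sgl i) • (ι Q (sgl i) • γ)) := by
  have hφ : HasFDerivAt (fun y : E => f y • (ι Q y • γ))
      (f x • (iotaSmul Q γ) + f'.smulRight (iotaSmul Q γ x)) x := h.smul (iotaSmul Q γ).hasFDerivAt
  rw [diracOp_eval hφ]
  have step1 : ∀ i : Fin n,
      ι Q (sgl i) • ((f x • (iotaSmul Q γ) + f'.smulRight (iotaSmul Q γ x)) (sgl i))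
        = f x • (ι Q (sgl i) • ι Q (sgl i) • γ) + f' (sgl i) • (ι Q (sgl i) • (ι Q x • γ)) := by
    intro i
    simp [cl_real_comm, smul_add]
  rw [Finset.sum_congr rfl fun i _ => step1 i, Finset.sum_add_distrib, ← Finset.smul_sum,
    cl_sum_sq hQ]
  have step2 : ∀ i : Fin n, f' (sgl i) • (ι Q (sgl i) • (ι Q x • γ))
      = -(f' (sgl i) • (ι Q x • (ι Q (sgl i) • γ))) - (f' (sgl i) * (2 * x i)) • γ := by
    intro i
    rw [cl_swap hQ (sgl i) x γ, inner_sgl_left, smul_sub, smul_neg,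
      smul_smul (f' (sgl i)) (2 * x i) γ]
  rw [Finset.sum_congr rfl fun i _ => step2 i, Finset.sum_sub_distrib]
  have step3 : ∑ i, f' (sgl i) • (ι Q x • (ι Q (sgl i) • γ))
      = ι Q x • ∑ i, f' (sgl i) • (ι Q (sgl i) • γ) := by
    rw [Finset.smul_sum]
    exact Finset.sum_congr rfl fun i _ => (cl_real_comm _ _ _).symm
  have step4 : ∑ i, (f' (sgl i) * (2 * x i)) • γ
      = (2 * ∑ i, f' (sgl i) * x i) • (γ : W) := by
    rw [← Finset.sum_smul]
    congr 1
    rw [Finset.mul_sum]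
    exact Finset.sum_congr rfl fun i _ => by ring
  rw [Finset.sum_neg_distrib, step3, step4]
  have step5 : f x • (-((n : ℝ) • γ)) = (-((n : ℝ) * f x)) • γ := by
    rw [smul_neg, smul_smul, ← neg_smul, mul_comm]
  rw [step5, sub_smul]
  abel
def gen0 (k : ℝ) (idx : Fin m → Fin n) (γ : W) : EuclideanSpace ℝ (Fin n) → W := fun x =>
  ((∏ j, x (idx j)) * (if k = 0 then Real.log ‖x‖ else ‖x‖ ^ k)) • γ

def gen1 (Q : QuadraticForm ℝ (EuclideanSpace ℝ (Fin n)))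
    {W : Type*} [NormedAddCommGroup W] [NormedSpace ℂ W]
    [Module (CliffordAlgebra Q) W] [IsScalarTower ℝ (CliffordAlgebra Q) W]
    (k : ℝ) {m : ℕ} (idx : Fin m → Fin n) (γ : W) : EuclideanSpace ℝ (Fin n) → W := fun x =>
  ((∏ j, x (idx j)) * (if k = 0 then 1 - n * Real.log ‖x‖ else ‖x‖ ^ k)) • (ι Q x • γ)

lemma gen0_mem (k : ℝ) (idx : Fin m → Fin n) (γ : W) :
    gen0 k idx γ ∈ Pspace Q W k m 0 :=
  Submodule.subset_span ⟨idx, γ, fun x => by simp [gen0]⟩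

lemma gen1_mem (k : ℝ) (idx : Fin m → Fin n) (γ : W) :
    gen1 Q k idx γ ∈ Pspace Q W k m 1 :=
  Submodule.subset_span ⟨idx, γ, fun x => by simp [gen1]⟩

lemma gen0_rw {k : ℝ} (hk : k ≠ 0) (idx : Fin m → Fin n) (γ : W) :
    gen0 k idx γ = fun y : E => ((∏ j, y (idx j)) * ‖y‖ ^ k) • γ :=
  funext fun y => by simp [gen0, hk]

lemma gen0log_rw (idx : Fin m → Fin n) (γ : W) :
    gen0 (0 : ℝ) idx γ = fun y : E => ((∏ j, y (idx j)) * Real.log ‖y‖) • γ :=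
  funext fun y => by simp [gen0]

lemma gen1_rw {k : ℝ} (hk : k ≠ 0) (idx : Fin m → Fin n) (γ : W) :
    gen1 Q k idx γ = fun y : E => ((∏ j, y (idx j)) * ‖y‖ ^ k) • (ι Q y • γ) :=
  funext fun y => by simp [gen1, hk]

lemma sum_split_smul {M : Type*} [AddCommMonoid M] [Module ℝ M] (a b : Fin n → ℝ) (v : Fin n → M) :
    ∑ i, (a i + b i) • v i = ∑ i, a i • v i + ∑ i, b i • v i := by
  rw [← Finset.sum_add_distrib]
  exact Finset.sum_congr rfl fun i _ => add_smul _ _ _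

lemma sum_pull {M : Type*} [AddCommMonoid M] [Module ℝ M] (c : ℝ) (a : Fin n → ℝ) (v : Fin n → M) :
    ∑ i, (c * a i) • v i = c • ∑ i, a i • v i := by
  rw [Finset.smul_sum]
  exact Finset.sum_congr rfl fun i _ => mul_smul _ _ _

lemma norm_rpow_key {x : E} (hx : x ≠ 0) (k : ℝ) : ‖x‖ ^ (k - 2) * ‖x‖ ^ 2 = ‖x‖ ^ k := by
  have hpos : (0 : ℝ) < ‖x‖ := norm_pos_iff.mpr hx
  rw [← Real.rpow_natCast ‖x‖ 2, ← Real.rpow_add hpos]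
  norm_num

section GenProps

lemma gen0_props {k : ℝ} {x : E} (hk : k ≠ 0) (idx : Fin m → Fin n) (γ : W) (hx : x ≠ 0) :
    DifferentiableAt ℝ (gen0 (W := W) k idx γ) x ∧
    diracOp Q (gen0 k idx γ) x
      = ((∏ j, x (idx j)) * (k * ‖x‖ ^ (k - 2))) • (ι Q x • γ)
        + ‖x‖ ^ k • ∑ j, (∏ l ∈ univ.erase j, x (idx l)) • (ι Q (sgl (idx j)) • γ) := by
  have hf : HasFDerivAt (fun y : E => (∏ j, y (idx j)) * ‖y‖ ^ k)
      ((∏ j, x (idx j)) • ((k * ‖x‖ ^ (k - 2)) • (innerSL ℝ x : EuclideanSpace ℝ (Fin n) →L[ℝ] ℝ))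
        + (‖x‖ ^ k) • monoD idx x) x :=
    (hasFDerivAt_mono idx x).mul (hasFDerivAt_rpow_norm k hx)
  have hev : ∀ i : Fin n,
      ((∏ j, x (idx j)) • ((k * ‖x‖ ^ (k - 2)) • (innerSL ℝ x : EuclideanSpace ℝ (Fin n) →L[ℝ] ℝ))
        + (‖x‖ ^ k) • monoD idx x) (sgl i)
      = ((∏ j, x (idx j)) * (k * ‖x‖ ^ (k - 2))) * x i + ‖x‖ ^ k * monoD idx x (sgl i) := by
    intro i
    simp only [ContinuousLinearMap.add_apply, ContinuousLinearMap.coe_smul', Pi.smul_apply,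
      smul_eq_mul, innerSL_apply_apply, inner_sgl_right, mul_assoc]
  rw [gen0_rw hk idx γ]
  refine ⟨(hf.smul_const γ).differentiableAt, ?_⟩
  rw [dirac_smul_const hf γ, Finset.sum_congr rfl fun i _ => by rw [hev i],
    sum_split_smul, sum_pull, sum_pull, cl_decomp, sum_monoD_smul]

lemma gen1_props {k : ℝ} {x : E} (hQ : ∀ v : E, Q v = -‖v‖ ^ 2) (hk : k ≠ 0) (idx : Fin m → Fin n) (γ : W)
    (hx : x ≠ 0) :
    DifferentiableAt ℝ (gen1 Q k idx γ) x ∧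
    diracOp Q (gen1 Q k idx γ) x
      = (-(k + 2 * m + n) * ((∏ j, x (idx j)) * ‖x‖ ^ k)) • γ
        - ‖x‖ ^ k •
          (ι Q x • ∑ j, (∏ l ∈ univ.erase j, x (idx l)) • (ι Q (sgl (idx j)) • γ)) := by
  have hpos : (0 : ℝ) < ‖x‖ := norm_pos_iff.mpr hx
  have hf : HasFDerivAt (fun y : E => (∏ j, y (idx j)) * ‖y‖ ^ k)
      ((∏ j, x (idx j)) • ((k * ‖x‖ ^ (k - 2)) • (innerSL ℝ x : EuclideanSpace ℝ (Fin n) →L[ℝ] ℝ))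
        + (‖x‖ ^ k) • monoD idx x) x :=
    (hasFDerivAt_mono idx x).mul (hasFDerivAt_rpow_norm k hx)
  have hev : ∀ i : Fin n,
      ((∏ j, x (idx j)) • ((k * ‖x‖ ^ (k - 2)) • (innerSL ℝ x : EuclideanSpace ℝ (Fin n) →L[ℝ] ℝ))
        + (‖x‖ ^ k) • monoD idx x) (sgl i)
      = ((∏ j, x (idx j)) * (k * ‖x‖ ^ (k - 2))) * x i + ‖x‖ ^ k * monoD idx x (sgl i) := by
    intro i
    simp only [ContinuousLinearMap.add_apply, ContinuousLinearMap.coe_smul', Pi.smul_apply,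
      smul_eq_mul, innerSL_apply_apply, inner_sgl_right, mul_assoc]
  rw [gen1_rw hk idx γ]
  constructor
  · exact (hf.smul ((iotaSmul Q γ).hasFDerivAt)).differentiableAt
  rw [dirac_smul_iota hQ hf γ]
  have hA : ∑ i, (((∏ j, x (idx j)) • ((k * ‖x‖ ^ (k - 2)) • (innerSL ℝ x : EuclideanSpace ℝ (Fin n) →L[ℝ] ℝ))
        + (‖x‖ ^ k) • monoD idx x) (sgl i)) • (ι Q (sgl i) • γ)
      = ((∏ j, x (idx j)) * (k * ‖x‖ ^ (k - 2))) • (ι Q x • γ)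
        + ‖x‖ ^ k • ∑ j, (∏ l ∈ univ.erase j, x (idx l)) • (ι Q (sgl (idx j)) • γ) := by
    rw [Finset.sum_congr rfl fun i _ => by rw [hev i],
      sum_split_smul, sum_pull, sum_pull, cl_decomp, sum_monoD_smul]
  have hs : ∑ i, (((∏ j, x (idx j)) • ((k * ‖x‖ ^ (k - 2)) • (innerSL ℝ x : EuclideanSpace ℝ (Fin n) →L[ℝ] ℝ))
        + (‖x‖ ^ k) • monoD idx x) (sgl i)) * x i
      = (k + m) * ((∏ j, x (idx j)) * ‖x‖ ^ k) := by
    rw [Finset.sum_congr rfl fun i _ => by rw [hev i, add_mul], Finset.sum_add_distrib]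
    rw [show ∑ i, ((∏ j, x (idx j)) * (k * ‖x‖ ^ (k - 2))) * x i * x i
        = ((∏ j, x (idx j)) * (k * ‖x‖ ^ (k - 2))) * ∑ i, x i * x i from by
      rw [Finset.mul_sum]; exact Finset.sum_congr rfl fun i _ => by ring]
    rw [show ∑ i, ‖x‖ ^ k * monoD idx x (sgl i) * x i
        = ‖x‖ ^ k * ∑ i, monoD idx x (sgl i) * x i from by
      rw [Finset.mul_sum]; exact Finset.sum_congr rfl fun i _ => by ring]
    rw [sum_coord_sq, euler]
    linear_combination (∏ j, x (idx j)) * k * norm_rpow_key hx k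
  rw [hA, hs, smul_add, cl_real_comm, cl_real_comm, cl_sq hQ]
  have h3 : ((∏ j, x (idx j)) * (k * ‖x‖ ^ (k - 2))) • (-(‖x‖ ^ 2 • γ))
      = (-(k * ((∏ j, x (idx j)) * ‖x‖ ^ k))) • γ := by
    rw [smul_neg, smul_smul, ← neg_smul]
    congr 1
    rw [← norm_rpow_key hx k]
    ring
  rw [h3, sub_add_eq_sub_sub, ← sub_smul,
    show (-((n : ℝ) * ((∏ j, x (idx j)) * ‖x‖ ^ k))
        - 2 * ((k + m) * ((∏ j, x (idx j)) * ‖x‖ ^ k)))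
        - (-(k * ((∏ j, x (idx j)) * ‖x‖ ^ k)))
        = -(k + 2 * m + n) * ((∏ j, x (idx j)) * ‖x‖ ^ k) from by push_cast; ring]

end GenProps
lemma gen0log_props {x : E} (idx : Fin m → Fin n) (γ : W) (hx : x ≠ 0) :
    DifferentiableAt ℝ (gen0 (W := W) (0 : ℝ) idx γ) x ∧
    diracOp Q (gen0 (0 : ℝ) idx γ) x
      = ((∏ j, x (idx j)) * (‖x‖ ^ 2)⁻¹) • (ι Q x • γ)
        + Real.log ‖x‖ • ∑ j, (∏ l ∈ univ.erase j, x (idx l)) • (ι Q (sgl (idx j)) • γ) := by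
  have hf : HasFDerivAt (fun y : E => (∏ j, y (idx j)) * Real.log ‖y‖)
      ((∏ j, x (idx j)) • (((‖x‖ ^ 2 : ℝ)⁻¹) • (innerSL ℝ x : EuclideanSpace ℝ (Fin n) →L[ℝ] ℝ))
        + (Real.log ‖x‖) • monoD idx x) x :=
    (hasFDerivAt_mono idx x).mul (hasFDerivAt_log_norm hx)
  have hev : ∀ i : Fin n,
      ((∏ j, x (idx j)) • (((‖x‖ ^ 2 : ℝ)⁻¹) • (innerSL ℝ x : EuclideanSpace ℝ (Fin n) →L[ℝ] ℝ))
        + (Real.log ‖x‖) • monoD idx x) (sgl i)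
      = ((∏ j, x (idx j)) * (‖x‖ ^ 2)⁻¹) * x i + Real.log ‖x‖ * monoD idx x (sgl i) := by
    intro i
    simp only [ContinuousLinearMap.add_apply, ContinuousLinearMap.coe_smul', Pi.smul_apply,
      smul_eq_mul, innerSL_apply_apply, inner_sgl_right, mul_assoc]
  rw [gen0log_rw idx γ]
  refine ⟨(hf.smul_const γ).differentiableAt, ?_⟩
  rw [dirac_smul_const hf γ, Finset.sum_congr rfl fun i _ => by rw [hev i],
    sum_split_smul, sum_pull, sum_pull, cl_decomp, sum_monoD_smul]

lemma gen1log0_props {x : E} (hQ : ∀ v : E, Q v = -‖v‖ ^ 2) (idx : Fin 0 → Fin n) (γ : W)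
    (hx : x ≠ 0) :
    DifferentiableAt ℝ (gen1 Q (0 : ℝ) idx γ) x ∧
    diracOp Q (gen1 Q (0 : ℝ) idx γ) x = ((n : ℝ) ^ 2 * Real.log ‖x‖) • γ := by
  have h2 : (0 : ℝ) < ‖x‖ ^ 2 := pow_pos (norm_pos_iff.mpr hx) 2
  have hgen : gen1 Q (0 : ℝ) idx γ = fun y : E => (1 - (n : ℝ) * Real.log ‖y‖) • (ι Q y • γ) :=
    funext fun y => by simp [gen1]
  have hf : HasFDerivAt (fun y : E => 1 - (n : ℝ) * Real.log ‖y‖)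
      (-((n : ℝ) • (((‖x‖ ^ 2 : ℝ)⁻¹) • (innerSL ℝ x : EuclideanSpace ℝ (Fin n) →L[ℝ] ℝ)))) x :=
    ((hasFDerivAt_log_norm hx).const_mul (n : ℝ)).const_sub 1
  have hev : ∀ i : Fin n,
      (-((n : ℝ) • (((‖x‖ ^ 2 : ℝ)⁻¹) • (innerSL ℝ x : EuclideanSpace ℝ (Fin n) →L[ℝ] ℝ)))) (sgl i)
      = -(((n : ℝ) * (‖x‖ ^ 2)⁻¹) * x i) := by
    intro i
    simp only [ContinuousLinearMap.neg_apply, ContinuousLinearMap.coe_smul', Pi.smul_apply,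
      smul_eq_mul, innerSL_apply_apply, inner_sgl_right, mul_assoc]
  rw [hgen]
  constructor
  · exact (hf.smul ((iotaSmul Q γ).hasFDerivAt)).differentiableAt
  rw [dirac_smul_iota hQ hf γ]
  have hA : ∑ i, ((-((n : ℝ) • (((‖x‖ ^ 2 : ℝ)⁻¹) • (innerSL ℝ x : EuclideanSpace ℝ (Fin n) →L[ℝ] ℝ)))) (sgl i))
        • (ι Q (sgl i) • γ)
      = (-((n : ℝ) * (‖x‖ ^ 2)⁻¹)) • (ι Q x • γ) := by
    rw [Finset.sum_congr rfl fun i _ => by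
      rw [hev i, show -(((n : ℝ) * (‖x‖ ^ 2)⁻¹) * x i) = (-((n : ℝ) * (‖x‖ ^ 2)⁻¹)) * x i from by
        ring]]
    rw [sum_pull, cl_decomp]
  have hs : ∑ i, ((-((n : ℝ) • (((‖x‖ ^ 2 : ℝ)⁻¹) • (innerSL ℝ x : EuclideanSpace ℝ (Fin n) →L[ℝ] ℝ)))) (sgl i)) * x i
      = -(n : ℝ) := by
    rw [Finset.sum_congr rfl fun i _ => by
      rw [hev i, show -(((n : ℝ) * (‖x‖ ^ 2)⁻¹) * x i) * x i
          = (-((n : ℝ) * (‖x‖ ^ 2)⁻¹)) * (x i * x i) from by ring]]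
    rw [← Finset.mul_sum, sum_coord_sq]
    field_simp
  rw [hA, hs, cl_real_comm, cl_sq hQ]
  have h3 : (-((n : ℝ) * (‖x‖ ^ 2)⁻¹)) • (-(‖x‖ ^ 2 • γ)) = (n : ℝ) • γ := by
    rw [smul_neg, smul_smul, ← neg_smul]
    congr 1
    have h2' : (‖x‖ ^ 2 : ℝ) ≠ 0 := ne_of_gt h2
    field_simp
  rw [h3, ← sub_smul,
    show (-((n : ℝ) * (1 - (n : ℝ) * Real.log ‖x‖)) - 2 * -(n : ℝ)) - (n : ℝ)
      = (n : ℝ) ^ 2 * Real.log ‖x‖ from by ring]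
lemma diracOp_add {φ₁ φ₂ : E → W} {x : E} (h₁ : DifferentiableAt ℝ φ₁ x)
    (h₂ : DifferentiableAt ℝ φ₂ x) :
    diracOp Q (φ₁ + φ₂) x = diracOp Q φ₁ x + diracOp Q φ₂ x := by
  rw [diracOp, diracOp, diracOp, ← Finset.sum_add_distrib]
  refine Finset.sum_congr rfl fun i _ => ?_
  rw [show fderiv ℝ (φ₁ + φ₂) x = fderiv ℝ φ₁ x + fderiv ℝ φ₂ x from fderiv_add h₁ h₂]
  rw [ContinuousLinearMap.add_apply, smul_add]

lemma diracOp_csmul {φ : E → W} {x : E} (c : ℂ) (h : DifferentiableAt ℝ φ x) :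
    diracOp Q (c • φ) x = c • diracOp Q φ x := by
  rw [diracOp, diracOp, Finset.smul_sum]
  refine Finset.sum_congr rfl fun i _ => ?_
  rw [show fderiv ℝ (c • φ) x = c • fderiv ℝ φ x from fderiv_const_smul h c,
    ContinuousLinearMap.smul_apply]
  exact (smul_comm c _ _).symm

def IsDSol (Q : QuadraticForm ℝ (EuclideanSpace ℝ (Fin n)))
    {W : Type*} [NormedAddCommGroup W] [NormedSpace ℂ W]
    [Module (CliffordAlgebra Q) W] [IsScalarTower ℝ (CliffordAlgebra Q) W]
    (V : Submodule ℂ (EuclideanSpace ℝ (Fin n) → W)) (ψ : EuclideanSpace ℝ (Fin n) → W) : Prop :=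
  ∃ φ ∈ V, (∀ x : EuclideanSpace ℝ (Fin n), x ≠ 0 → DifferentiableAt ℝ φ x) ∧
    ∀ x : EuclideanSpace ℝ (Fin n), x ≠ 0 → diracOp Q φ x = ψ x

lemma IsDSol.mono {V V' : Submodule ℂ (EuclideanSpace ℝ (Fin n) → W)} {ψ : E → W}
    (hV : V ≤ V') (h : IsDSol Q V ψ) : IsDSol Q V' ψ := by
  obtain ⟨φ, h1, h2, h3⟩ := h
  exact ⟨φ, hV h1, h2, h3⟩

lemma IsDSol.congr {V : Submodule ℂ (EuclideanSpace ℝ (Fin n) → W)} {ψ ψ' : E → W}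
    (h : IsDSol Q V ψ) (he : ∀ x : E, x ≠ 0 → ψ x = ψ' x) : IsDSol Q V ψ' := by
  obtain ⟨φ, h1, h2, h3⟩ := h
  exact ⟨φ, h1, h2, fun x hx => (h3 x hx).trans (he x hx)⟩

lemma isDSol_zero {V : Submodule ℂ (EuclideanSpace ℝ (Fin n) → W)} :
    IsDSol Q V (0 : E → W) := by
  refine ⟨0, V.zero_mem, fun x hx => ?_, fun x hx => ?_⟩
  · exact differentiableAt_const 0
  · show diracOp Q (fun _ => (0 : W)) x = (0 : E → W) x
    simp [diracOp]

lemma IsDSol.add {V : Submodule ℂ (EuclideanSpace ℝ (Fin n) → W)} {ψ₁ ψ₂ : E → W}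
    (h₁ : IsDSol Q V ψ₁) (h₂ : IsDSol Q V ψ₂) : IsDSol Q V (ψ₁ + ψ₂) := by
  obtain ⟨φ₁, m₁, d₁, e₁⟩ := h₁
  obtain ⟨φ₂, m₂, d₂, e₂⟩ := h₂
  refine ⟨φ₁ + φ₂, V.add_mem m₁ m₂, fun x hx => (d₁ x hx).add (d₂ x hx), fun x hx => ?_⟩
  rw [diracOp_add (d₁ x hx) (d₂ x hx), e₁ x hx, e₂ x hx]
  rfl

lemma IsDSol.csmul {V : Submodule ℂ (EuclideanSpace ℝ (Fin n) → W)} {ψ : E → W}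
    (c : ℂ) (h : IsDSol Q V ψ) : IsDSol Q V (c • ψ) := by
  obtain ⟨φ, m₁, d₁, e₁⟩ := h
  refine ⟨c • φ, V.smul_mem c m₁, fun x hx => ?_, fun x hx => ?_⟩
  · exact (d₁ x hx).const_smul c
  · rw [diracOp_csmul c (d₁ x hx), e₁ x hx]
    rfl

lemma isDSol_span {V : Submodule ℂ (EuclideanSpace ℝ (Fin n) → W)}
    {s : Set (EuclideanSpace ℝ (Fin n) → W)} (hgen : ∀ f ∈ s, IsDSol Q V f) :
    ∀ ψ ∈ Submodule.span ℂ s, IsDSol Q V ψ := by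
  intro ψ hψ
  refine Submodule.span_induction (p := fun f _ => IsDSol Q V f)
    (fun f hf => hgen f hf) isDSol_zero (fun f g _ _ hf hg => hf.add hg)
    (fun c f _ hf => hf.csmul c) hψ

lemma IsDSol.scale {V : Submodule ℂ (EuclideanSpace ℝ (Fin n) → W)} {ψ : E → W}
    {a : ℝ} (ha : a ≠ 0) (h : IsDSol Q V (fun x => a • ψ x)) : IsDSol Q V ψ := by
  have := h.csmul ((a : ℂ))⁻¹
  refine this.congr fun x hx => ?_
  show ((a : ℂ))⁻¹ • (a • ψ x) = ψ x
  rw [show a • ψ x = ((a : ℂ)) • ψ x from (Complex.coe_smul a (ψ x)).symm, smul_smul,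
    inv_mul_cancel₀ (by exact_mod_cast ha), one_smul]

lemma isDSol_sum {V : Submodule ℂ (EuclideanSpace ℝ (Fin n) → W)} {α : Type*} {s : Finset α}
    {F : α → E → W} (h : ∀ a ∈ s, IsDSol Q V (F a)) :
    IsDSol Q V (fun x => ∑ a ∈ s, F a x) := by
  classical
  induction s using Finset.induction_on with
  | empty => exact isDSol_zero.congr (by simp)
  | @insert a s' hni ih =>
    exact ((h a (Finset.mem_insert_self a s')).add
      (ih fun b hb => h b (Finset.mem_insert_of_mem hb))).congr
      (fun x hx => by simp [Finset.sum_insert hni])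
lemma prod_erase_eq {d : ℕ} (g : Fin (d + 1) → ℝ) (j : Fin (d + 1)) :
    ∏ l ∈ univ.erase j, g l = ∏ l : Fin d, g (j.succAbove l) := by
  have himg : Finset.image j.succAbove univ = univ.erase j := by
    ext a
    simp only [Finset.mem_image, Finset.mem_univ, true_and, Finset.mem_erase, and_true]
    constructor
    · rintro ⟨b, rfl⟩
      exact Fin.succAbove_ne j b
    · intro ha
      exact Fin.exists_succAbove_eq ha
  rw [← himg, Finset.prod_image fun a _ b _ h => Fin.succAbove_right_injective h]

lemma Pspace_congr {k₁ k₂ : ℝ} {m₁ m₂ t : ℕ} (hk : k₁ = k₂) (hm : m₁ = m₂) :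
    Pspace Q W k₁ m₁ t = Pspace Q W k₂ m₂ t := by
  subst hk hm
  rfl

lemma sum_submodule_le {R M : Type*} [Semiring R] [AddCommMonoid M] [Module R M]
    {α : Type*} {s : Finset α} {f : α → Submodule R M} {V : Submodule R M}
    (h : ∀ j ∈ s, f j ≤ V) : (∑ j ∈ s, f j) ≤ V := by
  classical
  induction s using Finset.induction_on with
  | empty => simp
  | @insert a s' hni ih =>
    rw [Finset.sum_insert hni, Submodule.add_eq_sup]
    exact sup_le (h a (Finset.mem_insert_self a s'))
      (ih fun b hb => h b (Finset.mem_insert_of_mem hb))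

lemma single_submodule_le {R M : Type*} [Semiring R] [AddCommMonoid M] [Module R M]
    {α : Type*} {s : Finset α} {f : α → Submodule R M} {j : α} (hj : j ∈ s) :
    f j ≤ ∑ i ∈ s, f i :=
  le_trans (by rfl) (Finset.single_le_sum (f := f) (fun i _ => zero_le) hj)

def Vsp (Q : QuadraticForm ℝ (EuclideanSpace ℝ (Fin n)))
    (W : Type*) [NormedAddCommGroup W] [NormedSpace ℂ W]
    [Module (CliffordAlgebra Q) W] [IsScalarTower ℝ (CliffordAlgebra Q) W]
    (k : ℝ) (m : ℕ) : Submodule ℂ (EuclideanSpace ℝ (Fin n) → W) :=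
  (∑ j ∈ Finset.Icc 1 ((m + 1) / 2), Pspace Q W (k + 2 * j) (m + 1 - 2 * j) 0)
    + (∑ j ∈ Finset.Icc 0 (m / 2), Pspace Q W (k + 2 * j) (m - 2 * j) 1)

lemma I1 (k : ℝ) (m : ℕ) : Pspace Q W k m 1 ≤ Vsp Q W k m := by
  have h0 : Pspace Q W k m 1 = Pspace Q W (k + 2 * ((0 : ℕ) : ℝ)) (m - 2 * 0) 1 :=
    Pspace_congr (by norm_num) (by omega)
  rw [h0]
  refine le_trans (single_submodule_le (f := fun j : ℕ => Pspace Q W (k + 2 * j) (m - 2 * j) 1)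
    (by simp : (0 : ℕ) ∈ Finset.Icc 0 (m / 2))) ?_
  exact le_add_self

lemma I2 (k : ℝ) (d : ℕ) : Pspace Q W (k + 2) d 0 ≤ Vsp Q W k (d + 1) := by
  have h0 : Pspace Q W (k + 2) d 0 = Pspace Q W (k + 2 * ((1 : ℕ) : ℝ)) (d + 1 + 1 - 2 * 1) 0 :=
    Pspace_congr (by norm_num) (by omega)
  rw [h0]
  refine le_trans (single_submodule_le
    (f := fun j : ℕ => Pspace Q W (k + 2 * j) (d + 1 + 1 - 2 * j) 0)
    (by simp [Nat.le_div_iff_mul_le] : (1 : ℕ) ∈ Finset.Icc 1 ((d + 1 + 1) / 2))) ?_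
  exact le_self_add

lemma I3 (k : ℝ) (d : ℕ) : Vsp Q W (k + 2) d ≤ Vsp Q W k (d + 2) := by
  rw [Vsp, Vsp]
  refine add_le_add ?_ ?_
  · refine sum_submodule_le fun j hj => ?_
    simp only [Finset.mem_Icc] at hj
    have h0 : Pspace Q W (k + 2 + 2 * (j : ℝ)) (d + 1 - 2 * j) 0
        = Pspace Q W (k + 2 * ((j + 1 : ℕ) : ℝ)) (d + 2 + 1 - 2 * (j + 1)) 0 :=
      Pspace_congr (by push_cast; ring) (by omega)
    rw [h0]
    exact single_submodule_le
      (f := fun j : ℕ => Pspace Q W (k + 2 * j) (d + 2 + 1 - 2 * j) 0)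
      (by simp only [Finset.mem_Icc]; omega)
  · refine sum_submodule_le fun j hj => ?_
    simp only [Finset.mem_Icc] at hj
    have h0 : Pspace Q W (k + 2 + 2 * (j : ℝ)) (d - 2 * j) 1
        = Pspace Q W (k + 2 * ((j + 1 : ℕ) : ℝ)) (d + 2 - 2 * (j + 1)) 1 :=
      Pspace_congr (by push_cast; ring) (by omega)
    rw [h0]
    exact single_submodule_le
      (f := fun j : ℕ => Pspace Q W (k + 2 * j) (d + 2 - 2 * j) 1)
      (by simp only [Finset.mem_Icc]; omega)
lemma main (hn : 2 ≤ n) (hQ : ∀ v : E, Q v = -‖v‖ ^ 2) :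
    ∀ m : ℕ, ∀ k : ℝ, -(n : ℝ) ≤ k → -(n : ℝ) < k + m → k + m ≤ 0 →
      ∀ ψ ∈ Pspace Q W k m 0, IsDSol Q (Vsp Q W k m) ψ := by
  intro m
  induction m using Nat.strong_induction_on with
  | _ m IH =>
  intro k hk hkm hkm' ψ hψ
  refine isDSol_span (fun f hf => ?_) ψ hψ
  obtain ⟨idx, γ, hfx⟩ := hf
  have hfg : f = gen0 k idx γ := funext fun x => by rw [hfx x]; simp [gen0]
  subst hfg
  clear hfx
  cases m with
  | zero =>
    by_cases hk0 : k = 0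
    · subst hk0
      have hn0 : ((n : ℝ) ^ 2) ≠ 0 := by positivity
      refine IsDSol.scale hn0 ?_
      refine IsDSol.congr (ψ := fun x : E => ((n : ℝ) ^ 2 * Real.log ‖x‖) • γ)
        ⟨gen1 Q 0 idx γ, I1 0 0 (gen1_mem 0 idx γ),
          fun x hx => (gen1log0_props hQ idx γ hx).1,
          fun x hx => (gen1log0_props hQ idx γ hx).2⟩ fun x hx => ?_
      simp [gen0, smul_smul]
    · have hkn : -(k + n) ≠ 0 := by
        push_cast at hkm
        intro h
        have : k = -(n : ℝ) := by linarith
        linarith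
      refine IsDSol.scale hkn ?_
      refine IsDSol.congr
        ⟨gen1 Q k idx γ, I1 k 0 (gen1_mem k idx γ),
          fun x hx => (gen1_props hQ hk0 idx γ hx).1,
          fun x hx => (gen1_props hQ hk0 idx γ hx).2⟩ fun x hx => ?_
      show (-(k + 2 * ((0:ℕ) : ℝ) + n) * ((∏ j, x (idx j)) * ‖x‖ ^ k)) • γ
          - ‖x‖ ^ k • (ι Q x • ∑ j : Fin 0, (∏ l ∈ univ.erase j, x (idx l)) •
              (ι Q (sgl (idx j)) • γ))
          = -(k + n) • gen0 k idx γ x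
      simp only [Finset.univ_eq_empty, Finset.sum_empty, smul_zero, sub_zero, gen0, if_neg hk0]
      rw [smul_smul]
      congr 1
      push_cast
      ring
  | succ d =>
    have hkneg : k < 0 := by
      push_cast at hkm'
      have : (0:ℝ) ≤ (d:ℝ) := Nat.cast_nonneg d
      linarith
    have hkne : k ≠ 0 := ne_of_lt hkneg
    have hχ : ∀ j : Fin (d + 1), IsDSol Q (Vsp Q W k (d + 1))
        (fun x : E => ((∏ l ∈ univ.erase j, x (idx l)) * ‖x‖ ^ k) •
          (ι Q x • (ι Q (sgl (idx j)) • γ))) := by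
      intro j
      have hprod : ∀ x : E, ∏ l ∈ univ.erase j, x (idx l)
          = ∏ l : Fin d, x (idx (j.succAbove l)) := fun x =>
        prod_erase_eq (fun l => x (idx l)) j
      by_cases hk2 : k + 2 = 0
      · -- logarithmic intermediate space
        have hle : Pspace Q W (0 : ℝ) d 0 ≤ Vsp Q W k (d + 1) := by
          rw [Pspace_congr (show (0:ℝ) = k + 2 from hk2.symm) rfl]
          exact I2 k d
        have hξ : IsDSol Q (Vsp Q W k (d + 1))
            (fun x : E => ∑ l : Fin d, ((∏ l' ∈ univ.erase l, x (idx (j.succAbove l'))) *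
              Real.log ‖x‖) • (ι Q (sgl (idx (j.succAbove l))) •
                (ι Q (sgl (idx j)) • γ))) := by
          refine isDSol_sum fun l _ => ?_
          have hd : 0 < d := l.pos
          obtain ⟨e, rfl⟩ : ∃ e, d = e + 1 := ⟨d - 1, by omega⟩
          have hIH := IH e (by omega) (k + 2) (by linarith)
            (by push_cast at hkm ⊢; linarith) (by push_cast at hkm' ⊢; linarith)
          have hgen := hIH (gen0 (k + 2) (fun t => idx (j.succAbove (l.succAbove t)))
              (ι Q (sgl (idx (j.succAbove l))) • (ι Q (sgl (idx j)) • γ)))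
            (gen0_mem (k + 2) _ _)
          refine (hgen.mono (I3 k e)).congr fun x hx => ?_
          show gen0 (k + 2) _ _ x = _
          rw [gen0]
          rw [show (∏ t : Fin e, x (idx (j.succAbove (l.succAbove t))))
              = ∏ l' ∈ univ.erase l, x (idx (j.succAbove l')) from
            (prod_erase_eq (fun t => x (idx (j.succAbove t))) l).symm]
          rw [if_pos hk2]
        have h1 : IsDSol Q (Vsp Q W k (d + 1)) (fun x : E =>
            ((∏ l : Fin d, x (idx (j.succAbove l))) * (‖x‖ ^ 2)⁻¹) •
              (ι Q x • (ι Q (sgl (idx j)) • γ))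
            + Real.log ‖x‖ • ∑ l : Fin d, (∏ l' ∈ univ.erase l, x (idx (j.succAbove l'))) •
                (ι Q (sgl (idx (j.succAbove l))) • (ι Q (sgl (idx j)) • γ))) :=
          ⟨gen0 (0 : ℝ) (fun l => idx (j.succAbove l)) (ι Q (sgl (idx j)) • γ),
            hle (gen0_mem (0 : ℝ) _ _),
            fun x hx => (gen0log_props (Q := Q) (fun l => idx (j.succAbove l)) _ hx).1,
            fun x hx => (gen0log_props (Q := Q) (fun l => idx (j.succAbove l)) _ hx).2⟩
        refine ((h1.add (hξ.csmul (-1))).congr fun x hx => ?_)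
        show _ + (-1 : ℂ) • (∑ l : Fin d, ((∏ l' ∈ univ.erase l, x (idx (j.succAbove l'))) *
            Real.log ‖x‖) • (ι Q (sgl (idx (j.succAbove l))) • (ι Q (sgl (idx j)) • γ))) = _
        rw [neg_one_smul ℂ]
        have hlog : ∑ l : Fin d, ((∏ l' ∈ univ.erase l, x (idx (j.succAbove l'))) *
              Real.log ‖x‖) • (ι Q (sgl (idx (j.succAbove l))) • (ι Q (sgl (idx j)) • γ))
            = Real.log ‖x‖ • ∑ l : Fin d, (∏ l' ∈ univ.erase l, x (idx (j.succAbove l'))) •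
                (ι Q (sgl (idx (j.succAbove l))) • (ι Q (sgl (idx j)) • γ)) := by
          rw [Finset.smul_sum]
          exact Finset.sum_congr rfl fun l _ => by rw [smul_smul, mul_comm, mul_smul]
        rw [hlog, add_neg_cancel_right, hprod x,
          show ((‖x‖ ^ 2 : ℝ))⁻¹ = ‖x‖ ^ k from by
            rw [show k = -2 from by linarith, show ((-2:ℝ)) = -((2:ℕ) : ℝ) from by norm_num,
              Real.rpow_neg (norm_nonneg x), Real.rpow_natCast]]
      · -- power intermediate space
        have hξ : IsDSol Q (Vsp Q W k (d + 1))
            (fun x : E => ∑ l : Fin d, ((∏ l' ∈ univ.erase l, x (idx (j.succAbove l'))) *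
              ‖x‖ ^ (k + 2)) • (ι Q (sgl (idx (j.succAbove l))) •
                (ι Q (sgl (idx j)) • γ))) := by
          refine isDSol_sum fun l _ => ?_
          have hd : 0 < d := l.pos
          obtain ⟨e, rfl⟩ : ∃ e, d = e + 1 := ⟨d - 1, by omega⟩
          have hIH := IH e (by omega) (k + 2) (by linarith)
            (by push_cast at hkm ⊢; linarith) (by push_cast at hkm' ⊢; linarith)
          have hgen := hIH (gen0 (k + 2) (fun t => idx (j.succAbove (l.succAbove t)))
              (ι Q (sgl (idx (j.succAbove l))) • (ι Q (sgl (idx j)) • γ)))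
            (gen0_mem (k + 2) _ _)
          refine (hgen.mono (I3 k e)).congr fun x hx => ?_
          show gen0 (k + 2) _ _ x = _
          rw [gen0]
          rw [show (∏ t : Fin e, x (idx (j.succAbove (l.succAbove t))))
              = ∏ l' ∈ univ.erase l, x (idx (j.succAbove l')) from
            (prod_erase_eq (fun t => x (idx (j.succAbove t))) l).symm]
          rw [if_neg hk2]
        have h1 : IsDSol Q (Vsp Q W k (d + 1)) (fun x : E =>
            ((∏ l : Fin d, x (idx (j.succAbove l))) * ((k + 2) * ‖x‖ ^ (k + 2 - 2))) •
              (ι Q x • (ι Q (sgl (idx j)) • γ))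
            + ‖x‖ ^ (k + 2) • ∑ l : Fin d, (∏ l' ∈ univ.erase l, x (idx (j.succAbove l'))) •
                (ι Q (sgl (idx (j.succAbove l))) • (ι Q (sgl (idx j)) • γ))) :=
          ⟨gen0 (k + 2) (fun l => idx (j.succAbove l)) (ι Q (sgl (idx j)) • γ),
            I2 k d (gen0_mem (k + 2) _ _),
            fun x hx => (gen0_props (Q := Q) hk2 (fun l => idx (j.succAbove l)) _ hx).1,
            fun x hx => (gen0_props (Q := Q) hk2 (fun l => idx (j.succAbove l)) _ hx).2⟩
        refine IsDSol.scale (a := k + 2) hk2 ?_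
        refine ((h1.add (hξ.csmul (-1))).congr fun x hx => ?_)
        show _ + (-1 : ℂ) • (∑ l : Fin d, ((∏ l' ∈ univ.erase l, x (idx (j.succAbove l'))) *
            ‖x‖ ^ (k + 2)) • (ι Q (sgl (idx (j.succAbove l))) • (ι Q (sgl (idx j)) • γ))) = _
        rw [neg_one_smul ℂ]
        have hpow : ∑ l : Fin d, ((∏ l' ∈ univ.erase l, x (idx (j.succAbove l'))) *
              ‖x‖ ^ (k + 2)) • (ι Q (sgl (idx (j.succAbove l))) • (ι Q (sgl (idx j)) • γ))
            = ‖x‖ ^ (k + 2) • ∑ l : Fin d, (∏ l' ∈ univ.erase l, x (idx (j.succAbove l'))) •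
                (ι Q (sgl (idx (j.succAbove l))) • (ι Q (sgl (idx j)) • γ)) := by
          rw [Finset.smul_sum]
          exact Finset.sum_congr rfl fun l _ => by rw [smul_smul, mul_comm, mul_smul]
        rw [hpow, add_neg_cancel_right, hprod x,
          smul_smul (k + 2) ((∏ l : Fin d, x (idx (j.succAbove l))) * ‖x‖ ^ k),
          show k + 2 - 2 = k from by ring]
        congr 1
        ring
    -- assemble
    have h1 : IsDSol Q (Vsp Q W k (d + 1)) (fun x : E =>
        (-(k + 2 * ((d + 1 : ℕ) : ℝ) + n) * ((∏ j, x (idx j)) * ‖x‖ ^ k)) • γ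
          - ‖x‖ ^ k • (ι Q x • ∑ j, (∏ l ∈ univ.erase j, x (idx l)) •
              (ι Q (sgl (idx j)) • γ))) :=
      ⟨gen1 Q k idx γ, I1 k (d + 1) (gen1_mem k idx γ),
        fun x hx => (gen1_props hQ hkne idx γ hx).1,
        fun x hx => (gen1_props hQ hkne idx γ hx).2⟩
    have h2 : IsDSol Q (Vsp Q W k (d + 1)) (fun x : E =>
        ‖x‖ ^ k • (ι Q x • ∑ j, (∏ l ∈ univ.erase j, x (idx l)) •
          (ι Q (sgl (idx j)) • γ))) := by
      refine (isDSol_sum (s := univ) (F := fun (j : Fin (d + 1)) (x : E) =>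
        ((∏ l ∈ univ.erase j, x (idx l)) * ‖x‖ ^ k) •
          (ι Q x • (ι Q (sgl (idx j)) • γ))) fun j _ => hχ j).congr fun x hx => ?_
      rw [Finset.smul_sum, Finset.smul_sum]
      exact Finset.sum_congr rfl fun l _ => by
        rw [cl_real_comm, smul_smul, mul_comm, mul_smul]
    have ha : -(k + 2 * ((d + 1 : ℕ) : ℝ) + n) ≠ 0 := by
      push_cast at hkm ⊢
      intro h
      have : (0:ℝ) ≤ (d:ℝ) := Nat.cast_nonneg d
      nlinarith
    refine IsDSol.scale ha ?_
    refine ((h1.add h2).congr fun x hx => ?_)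
    simp only [Pi.add_apply]
    rw [sub_add_cancel]
    simp only [gen0, if_neg hkne]
    rw [smul_smul]

end PDirac

/-- For all `m ∈ ℕ` and `k ∈ ℝ` with `−n ≤ k` and `−n < k + m ≤ 0`, every
`ψ ∈ P_{k,m,0}` is in the image under the Euclidean Dirac operator of the space
`∑_{j=1}^{⌊(m+1)/2⌋} P_{k+2j,m+1−2j,0} + ∑_{j=0}^{⌊m/2⌋} P_{k+2j,m−2j,1}`. -/
theorem Pspace_zero_subset_dirac_image {n : ℕ} (hn : 2 ≤ n)
    (Q : QuadraticForm ℝ (EuclideanSpace ℝ (Fin n)))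
    (hQ : ∀ v : EuclideanSpace ℝ (Fin n), Q v = -‖v‖ ^ 2)
    (W : Type*) [NormedAddCommGroup W] [NormedSpace ℂ W]
    [Module (CliffordAlgebra Q) W] [IsScalarTower ℝ (CliffordAlgebra Q) W]
    [SMulCommClass ℂ (CliffordAlgebra Q) W] [FiniteDimensional ℂ W]
    (m : ℕ) (k : ℝ) (hk : -(n : ℝ) ≤ k) (hkm : -(n : ℝ) < k + m) (hkm' : k + m ≤ 0)
    (ψ : EuclideanSpace ℝ (Fin n) → W) (hψ : ψ ∈ Pspace Q W k m 0) :
    ∃ φ ∈ (∑ j ∈ Finset.Icc 1 ((m + 1) / 2), Pspace Q W (k + 2 * j) (m + 1 - 2 * j) 0)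
        + (∑ j ∈ Finset.Icc 0 (m / 2), Pspace Q W (k + 2 * j) (m - 2 * j) 1),
      (∀ x : EuclideanSpace ℝ (Fin n), x ≠ 0 → DifferentiableAt ℝ φ x) ∧
      ∀ x : EuclideanSpace ℝ (Fin n), x ≠ 0 → diracOp Q φ x = ψ x := by
  obtain ⟨φ, h1, h2, h3⟩ := PDirac.main (W := W) hn hQ m k hk hkm hkm' ψ hψ
  exact ⟨φ, h1, h2, h3⟩
end
end

section
/- Let γ ∈ W be a constant spinor and k ∈ ℝ. Then for every x ∈ ℝⁿ with x ≠ 0: (i) if k ≠ −n, the Euclidean Dirac operator applied to the function x ↦ −(n+k)⁻¹‖x‖^k (x·γ) at x equals ‖x‖^k γ; (ii) if k ≠ −2, the Euclidean Dirac operator applied to the function x ↦ (k+2)⁻¹‖x‖^{k+2} γ at x equals ‖x‖^k (x·γ). -/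
noncomputable section

lemma aux_hasFDerivAt_norm_rpow {E : Type*} [NormedAddCommGroup E] [InnerProductSpace ℝ E]
    (k : ℝ) {x : E} (hx : x ≠ 0) :
    HasFDerivAt (fun y : E => ‖y‖ ^ k) ((k * ‖x‖ ^ (k - 2)) • innerSL ℝ x) x := by
  have hr : (0:ℝ) < ‖x‖ := norm_pos_iff.mpr hx
  have h1 := (hasStrictFDerivAt_norm_sq x).hasFDerivAt
  have h2 : HasDerivAt (fun t : ℝ => t ^ (k/2)) ((k/2) * (‖x‖^2) ^ (k/2 - 1)) (‖x‖^2) :=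
    Real.hasDerivAt_rpow_const (Or.inl (by positivity))
  have h3 := h2.comp_hasFDerivAt x h1
  have hfun : (fun y : E => ‖y‖ ^ k) = fun y : E => (‖y‖^2) ^ (k/2) := by
    funext y
    rw [← Real.rpow_natCast ‖y‖ 2, ← Real.rpow_mul (norm_nonneg y),
      show ((2:ℕ):ℝ)*(k/2) = k by push_cast; ring]
  rw [hfun]
  refine HasFDerivAt.congr_fderiv h3 ?_
  have h4 : ((‖x‖^2 : ℝ)) ^ (k/2 - 1) = ‖x‖ ^ (k - 2) := by
    rw [← Real.rpow_natCast ‖x‖ 2, ← Real.rpow_mul hr.le,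
      show ((2:ℕ):ℝ)*(k/2-1) = k-2 by push_cast; ring]
  ext v
  simp [h4, smul_smul]
  ring

open MeasureTheory Finset CliffordAlgebra

/-- For a constant spinor `γ` and `k : ℝ`, at every `x ≠ 0`:
(i) if `k ≠ -n`, then `D(-(n+k)⁻¹‖x‖^k (x·γ)) = ‖x‖^k γ`;
(ii) if `k ≠ -2`, then `D((k+2)⁻¹‖x‖^(k+2) γ) = ‖x‖^k (x·γ)`. -/
theorem diracOp_radial_power {n : ℕ} (hn : 2 ≤ n)
    (Q : QuadraticForm ℝ (EuclideanSpace ℝ (Fin n)))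
    (hQ : ∀ v : EuclideanSpace ℝ (Fin n), Q v = -‖v‖ ^ 2)
    (W : Type*) [NormedAddCommGroup W] [NormedSpace ℂ W]
    [Module (CliffordAlgebra Q) W] [IsScalarTower ℝ (CliffordAlgebra Q) W]
    [SMulCommClass ℂ (CliffordAlgebra Q) W] [FiniteDimensional ℂ W]
    (γ : W) (k : ℝ) (x : EuclideanSpace ℝ (Fin n)) (hx : x ≠ 0) :
    (k ≠ -(n : ℝ) →
      diracOp Q (fun y => (-(((n : ℝ) + k)⁻¹) * ‖y‖ ^ k) • ((CliffordAlgebra.ι Q y) • γ)) x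
        = (‖x‖ ^ k) • γ) ∧
    (k ≠ -2 →
      diracOp Q (fun y => ((k + 2)⁻¹ * ‖y‖ ^ (k + 2)) • γ) x
        = (‖x‖ ^ k) • ((CliffordAlgebra.ι Q x) • γ)) := by
  classical
  have hr : (0:ℝ) < ‖x‖ := norm_pos_iff.mpr hx
  -- basic Clifford facts
  have hsq : ∀ (v : EuclideanSpace ℝ (Fin n)) (w : W),
      (ι Q v) • ((ι Q v) • w) = (-(‖v‖^2 : ℝ)) • w := by
    intro v w
    rw [← mul_smul, ι_sq_scalar, algebraMap_smul, hQ]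
  have hx_sum : ∑ i, x i • EuclideanSpace.single i (1:ℝ) = x := by
    simpa [EuclideanSpace.basisFun_apply, EuclideanSpace.basisFun_repr] using
      (EuclideanSpace.basisFun (Fin n) ℝ).sum_repr x
  have hsum : ∀ w : W,
      ∑ i, (x i) • ((ι Q (EuclideanSpace.single i (1:ℝ))) • w) = (ι Q x) • w := by
    intro w
    have h1 : ∀ i : Fin n, (x i) • ((ι Q (EuclideanSpace.single i (1:ℝ))) • w)
        = (ι Q ((x i) • EuclideanSpace.single i (1:ℝ))) • w := by
      intro i; rw [_root_.map_smul, smul_assoc]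
    rw [Finset.sum_congr rfl fun i _ => h1 i, ← Finset.sum_smul, ← map_sum, hx_sum]
  have hone : ∀ i : Fin n, ‖EuclideanSpace.single i (1:ℝ)‖ = 1 := by
    intro i; simp
  have hcomm : ∀ (r : ℝ) (a : CliffordAlgebra Q) (w : W), a • (r • w) = r • (a • w) :=
    fun r a w => (smul_comm r a w).symm
  -- the continuous linear map v ↦ ι v • γ
  let L : EuclideanSpace ℝ (Fin n) →L[ℝ] W :=
    LinearMap.toContinuousLinearMap
      { toFun := fun v => (ι Q v) • γ
        map_add' := fun v w => by show (ι Q (v + w)) • γ = _; rw [map_add, add_smul]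
        map_smul' := fun r v => by
          show (ι Q (r • v)) • γ = r • ((ι Q v) • γ); rw [_root_.map_smul, smul_assoc] }
  have hLapp : ∀ v, L v = (ι Q v) • γ := fun v => rfl
  have hinner : ∀ i : Fin n, (innerSL ℝ x) (EuclideanSpace.single i (1:ℝ)) = x i := by
    intro i
    simp [EuclideanSpace.inner_single_right]
  have hpow : ‖x‖ ^ (k-2) * ‖x‖^(2:ℕ) = ‖x‖ ^ k := by
    rw [← Real.rpow_natCast ‖x‖ 2, ← Real.rpow_add hr]
    norm_num
  constructor
  · intro hk
    have hnk : ((n:ℝ) + k) ≠ 0 := by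
      intro h0; exact hk (by linarith)
    set c : ℝ := -(((n:ℝ)+k)⁻¹) with hc_def
    have hc : HasFDerivAt (fun y : EuclideanSpace ℝ (Fin n) => c * ‖y‖ ^ k)
        (c • ((k * ‖x‖ ^ (k-2)) • innerSL ℝ x)) x :=
      (aux_hasFDerivAt_norm_rpow k hx).const_mul c
    have hψ : HasFDerivAt
        (fun y => (c * ‖y‖ ^ k) • ((CliffordAlgebra.ι Q y) • γ))
        ((c * ‖x‖ ^ k) • L +
          (c • ((k * ‖x‖ ^ (k - 2)) • innerSL ℝ x)).smulRight (L x)) x :=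
      hc.smul L.hasFDerivAt
    unfold diracOp
    rw [hψ.fderiv]
    have step : ∀ i : Fin n,
        (ι Q (EuclideanSpace.single i (1:ℝ))) •
          (((c * ‖x‖ ^ k) • L +
            (c • ((k * ‖x‖ ^ (k - 2)) • innerSL ℝ x)).smulRight (L x))
              (EuclideanSpace.single i (1:ℝ)))
        = (c * ‖x‖ ^ k) • ((ι Q (EuclideanSpace.single i (1:ℝ))) •
              ((ι Q (EuclideanSpace.single i (1:ℝ))) • γ)) +
          (c * (k * ‖x‖ ^ (k-2)) * x i) •
            ((ι Q (EuclideanSpace.single i (1:ℝ))) • ((ι Q x) • γ)) := by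
      intro i
      simp only [ContinuousLinearMap.add_apply, ContinuousLinearMap.smul_apply,
        ContinuousLinearMap.smulRight_apply, hinner, hLapp, smul_eq_mul]
      rw [smul_add, hcomm, hcomm]
      congr 1
      congr 1
      ring
    rw [Finset.sum_congr rfl fun i _ => step i, Finset.sum_add_distrib]
    have hA : ∑ i : Fin n, (c * ‖x‖ ^ k) • ((ι Q (EuclideanSpace.single i (1:ℝ))) •
          ((ι Q (EuclideanSpace.single i (1:ℝ))) • γ))
        = ((n:ℝ) * (c * ‖x‖ ^ k)) • (-γ) := by
      have : ∀ i : Fin n, (c * ‖x‖ ^ k) • ((ι Q (EuclideanSpace.single i (1:ℝ))) •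
          ((ι Q (EuclideanSpace.single i (1:ℝ))) • γ)) = (c * ‖x‖ ^ k) • (-γ) := by
        intro i
        rw [hsq, hone]
        norm_num
      rw [Finset.sum_congr rfl fun i _ => this i, Finset.sum_const, Finset.card_univ,
        Fintype.card_fin, ← Nat.cast_smul_eq_nsmul ℝ, smul_smul]
    have hB : ∑ i : Fin n, (c * (k * ‖x‖ ^ (k-2)) * x i) •
          ((ι Q (EuclideanSpace.single i (1:ℝ))) • ((ι Q x) • γ))
        = (c * (k * ‖x‖ ^ (k-2)) * (-(‖x‖^(2:ℕ)))) • γ := by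
      have h1 : ∀ i : Fin n, (c * (k * ‖x‖ ^ (k-2)) * x i) •
            ((ι Q (EuclideanSpace.single i (1:ℝ))) • ((ι Q x) • γ))
          = (c * (k * ‖x‖ ^ (k-2))) • ((x i) •
            ((ι Q (EuclideanSpace.single i (1:ℝ))) • ((ι Q x) • γ))) :=
        fun i => mul_smul _ _ _
      rw [Finset.sum_congr rfl fun i _ => h1 i, ← Finset.smul_sum, hsum, hsq, smul_smul]
    rw [hA, hB]
    rw [smul_neg, ← neg_smul, ← add_smul]
    congr 1
    have : -((n:ℝ) * (c * ‖x‖ ^ k)) + c * (k * ‖x‖ ^ (k-2)) * -(‖x‖^(2:ℕ))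
        = (-c * ((n:ℝ) + k)) * ‖x‖ ^ k := by
      rw [← hpow]; ring
    rw [this, hc_def]
    field_simp
  · intro hk
    have hk2 : (k + 2) ≠ 0 := by intro h0; exact hk (by linarith)
    have hder := (aux_hasFDerivAt_norm_rpow (k+2) hx).const_mul ((k+2)⁻¹)
    have hψ : HasFDerivAt
        (fun y => ((k + 2)⁻¹ * ‖y‖ ^ (k + 2)) • γ)
        (((k+2)⁻¹ • (((k+2) * ‖x‖ ^ (k+2-2)) • innerSL ℝ x)).smulRight γ) x :=
      hder.smul_const γ
    unfold diracOp
    rw [hψ.fderiv]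
    have step : ∀ i : Fin n,
        (ι Q (EuclideanSpace.single i (1:ℝ))) •
          ((((k+2)⁻¹ • (((k+2) * ‖x‖ ^ (k+2-2)) • innerSL ℝ x)).smulRight γ)
            (EuclideanSpace.single i (1:ℝ)))
        = (‖x‖ ^ k) • ((x i) • ((ι Q (EuclideanSpace.single i (1:ℝ))) • γ)) := by
      intro i
      simp only [ContinuousLinearMap.smulRight_apply, ContinuousLinearMap.smul_apply,
        hinner, smul_eq_mul, smul_smul]
      rw [hcomm]
      congr 1
      rw [show k + 2 - 2 = k by ring]
      field_simp
    rw [Finset.sum_congr rfl fun i _ => step i, ← Finset.smul_sum, hsum]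
end
end

section
/- Let γ ∈ W be a constant spinor. Then for every x ∈ ℝⁿ with x ≠ 0: (i) the Euclidean Dirac operator applied to the function x ↦ n⁻²(1 − n·ln‖x‖)(x·γ) at x equals ln‖x‖ γ; (ii) the Euclidean Dirac operator applied to the function x ↦ ln‖x‖ γ at x equals ‖x‖⁻² (x·γ). -/
noncomputable section

open MeasureTheory Finset CliffordAlgebra

section Helpers
open CliffordAlgebra

variable {n : ℕ}

lemma hasFDerivAt_log_norm (x : EuclideanSpace ℝ (Fin n)) (hx : x ≠ 0) :
    HasFDerivAt (fun y : EuclideanSpace ℝ (Fin n) => Real.log ‖y‖)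
      (((‖x‖ ^ 2)⁻¹ : ℝ) • (innerSL ℝ x)) x := by
  have h0 : HasFDerivAt (fun y : EuclideanSpace ℝ (Fin n) => @inner ℝ _ _ y y)
      ((fderivInnerCLM ℝ (x, x)).comp ((ContinuousLinearMap.id ℝ _).prod (ContinuousLinearMap.id ℝ _))) x :=
    (hasFDerivAt_id x).inner ℝ (hasFDerivAt_id x)
  have hne : @inner ℝ _ _ x x ≠ 0 := by
    rw [real_inner_self_eq_norm_sq]
    have : ‖x‖ ≠ 0 := norm_ne_zero_iff.mpr hx
    positivity
  have h1 := (h0.log hne).const_mul (2⁻¹ : ℝ)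
  have hfun : (fun y : EuclideanSpace ℝ (Fin n) => Real.log ‖y‖)
      = fun y => 2⁻¹ * Real.log (@inner ℝ _ _ y y) := by
    funext y
    rw [real_inner_self_eq_norm_sq, Real.log_pow]
    push_cast; ring
  rw [hfun]
  refine h1.congr_fderiv ?_
  ext v
  have hx2 : (‖x‖ : ℝ) ^ 2 ≠ 0 := by
    have : ‖x‖ ≠ 0 := norm_ne_zero_iff.mpr hx
    positivity
  simp only [ContinuousLinearMap.smul_apply, ContinuousLinearMap.coe_comp',
    Function.comp_apply, ContinuousLinearMap.prod_apply, ContinuousLinearMap.coe_id', id_eq,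
    fderivInnerCLM_apply, innerSL_apply_apply, smul_eq_mul]
  rw [real_inner_comm v x, real_inner_self_eq_norm_sq]
  field_simp
  ring

lemma euclid_sum_single (x : EuclideanSpace ℝ (Fin n)) :
    ∑ i : Fin n, x i • EuclideanSpace.single i (1 : ℝ) = x := by
  have h := (EuclideanSpace.basisFun (Fin n) ℝ).sum_repr x
  simpa [EuclideanSpace.basisFun_apply, EuclideanSpace.basisFun_repr] using h

variable {Q : QuadraticForm ℝ (EuclideanSpace ℝ (Fin n))}
variable {W : Type*} [NormedAddCommGroup W] [NormedSpace ℂ W]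
  [Module (CliffordAlgebra Q) W] [IsScalarTower ℝ (CliffordAlgebra Q) W]

lemma cl_smul_comm (r : ℝ) (a : CliffordAlgebra Q) (w : W) :
    a • (r • w) = r • (a • w) := by
  rw [← algebraMap_smul (CliffordAlgebra Q) r w, ← mul_smul, ← Algebra.commutes, mul_smul,
    algebraMap_smul]

/-- `y ↦ ι Q y • γ` as a linear map. -/
def cliffSmulLM (γ : W) : EuclideanSpace ℝ (Fin n) →ₗ[ℝ] W where
  toFun y := (ι Q y) • γ
  map_add' y z := by simp only [map_add, add_smul]
  map_smul' r y := by simp only [_root_.map_smul, RingHom.id_apply, smul_assoc]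

lemma cliffSmul_hasFDerivAt (γ : W) (x : EuclideanSpace ℝ (Fin n)) :
    HasFDerivAt (fun y : EuclideanSpace ℝ (Fin n) => (ι Q y) • γ)
      ((cliffSmulLM (Q := Q) γ).toContinuousLinearMap) x := by
  have h := ((cliffSmulLM (Q := Q) γ).toContinuousLinearMap).hasFDerivAt (x := x)
  simpa [cliffSmulLM] using h

end Helpers

/-- For a constant spinor `γ`, at every `x ≠ 0`:
(i) `D(n⁻²(1 − n·ln‖x‖)(x·γ)) = ln‖x‖ γ`;
(ii) `D(ln‖x‖ γ) = ‖x‖⁻² (x·γ)`. -/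
theorem diracOp_radial_log {n : ℕ} (hn : 2 ≤ n)
    (Q : QuadraticForm ℝ (EuclideanSpace ℝ (Fin n)))
    (hQ : ∀ v : EuclideanSpace ℝ (Fin n), Q v = -‖v‖ ^ 2)
    (W : Type*) [NormedAddCommGroup W] [NormedSpace ℂ W]
    [Module (CliffordAlgebra Q) W] [IsScalarTower ℝ (CliffordAlgebra Q) W]
    [SMulCommClass ℂ (CliffordAlgebra Q) W] [FiniteDimensional ℂ W]
    (γ : W) (x : EuclideanSpace ℝ (Fin n)) (hx : x ≠ 0) :
    diracOp Q
        (fun y => (((n : ℝ) ^ 2)⁻¹ * (1 - n * Real.log ‖y‖)) • ((CliffordAlgebra.ι Q y) • γ)) x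
      = (Real.log ‖x‖) • γ ∧
    diracOp Q (fun y => (Real.log ‖y‖) • γ) x
      = ((‖x‖ ^ 2)⁻¹ : ℝ) • ((CliffordAlgebra.ι Q x) • γ) := by
  constructor
  · unfold diracOp
    have hinner : ∀ i : Fin n,
        (inner ℝ x (EuclideanSpace.single i (1 : ℝ)) : ℝ) = x i := by
      intro i
      simpa using EuclideanSpace.inner_single_right (𝕜 := ℝ) i 1 x
    have hx2 : (‖x‖ : ℝ) ^ 2 ≠ 0 := by
      have : ‖x‖ ≠ 0 := norm_ne_zero_iff.mpr hx
      positivity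
    have hn0 : (n : ℝ) ≠ 0 := by positivity
    have hf := (((hasFDerivAt_log_norm x hx).const_mul (n : ℝ)).const_sub 1).const_mul
      (((n : ℝ) ^ 2)⁻¹)
    have hL := cliffSmul_hasFDerivAt (Q := Q) γ x
    have hψ : HasFDerivAt (fun y : EuclideanSpace ℝ (Fin n) =>
        (((n : ℝ) ^ 2)⁻¹ * (1 - n * Real.log ‖y‖)) • ((CliffordAlgebra.ι Q y) • γ)) _ x := hf.smul hL
    rw [hψ.fderiv]
    simp only [ContinuousLinearMap.add_apply, ContinuousLinearMap.smul_apply,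
      ContinuousLinearMap.smulRight_apply, ContinuousLinearMap.neg_apply,
      innerSL_apply_apply, hinner, smul_eq_mul, LinearMap.coe_toContinuousLinearMap', cliffSmulLM,
      LinearMap.coe_mk, AddHom.coe_mk]
    have step : ∀ i : Fin n,
        (CliffordAlgebra.ι Q) (EuclideanSpace.single i (1:ℝ)) •
          ((((n:ℝ) ^ 2)⁻¹ * (1 - (n:ℝ) * Real.log ‖x‖)) • (CliffordAlgebra.ι Q) (EuclideanSpace.single i (1:ℝ)) • γ +
            (((n:ℝ) ^ 2)⁻¹ * -((n:ℝ) * ((‖x‖ ^ 2)⁻¹ * x i))) • (CliffordAlgebra.ι Q) x • γ)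
        = ((((n:ℝ) ^ 2)⁻¹ * (1 - (n:ℝ) * Real.log ‖x‖)) * (-1)) • γ
          + (-(((n:ℝ) ^ 2)⁻¹ * (n:ℝ) * (‖x‖ ^ 2)⁻¹)) •
              (x i • ((CliffordAlgebra.ι Q) (EuclideanSpace.single i (1:ℝ)) • ((CliffordAlgebra.ι Q) x • γ))) := by
      intro i
      rw [smul_add, cl_smul_comm, cl_smul_comm, ← mul_smul ((ι Q) (EuclideanSpace.single i (1:ℝ)))
        ((ι Q) (EuclideanSpace.single i (1:ℝ))), ι_sq_scalar, algebraMap_smul, hQ,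
        EuclideanSpace.norm_single, norm_one, one_pow, smul_smul]
      congr 1
      rw [show (((n:ℝ) ^ 2)⁻¹ * -((n:ℝ) * ((‖x‖ ^ 2)⁻¹ * x i)))
        = (-(((n:ℝ) ^ 2)⁻¹ * (n:ℝ) * (‖x‖ ^ 2)⁻¹)) * x i by ring, mul_smul]
    simp only [step]
    rw [Finset.sum_add_distrib, Finset.sum_const, Finset.card_univ, Fintype.card_fin,
      ← Nat.cast_smul_eq_nsmul ℝ, ← Finset.smul_sum]
    have step2 : ∀ i : Fin n,
        x i • ((CliffordAlgebra.ι Q) (EuclideanSpace.single i (1:ℝ)) • ((CliffordAlgebra.ι Q) x • γ))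
          = (x i • (CliffordAlgebra.ι Q) (EuclideanSpace.single i (1:ℝ))) • ((CliffordAlgebra.ι Q) x • γ) :=
      fun i => (smul_assoc _ _ _).symm
    simp only [step2]
    rw [← Finset.sum_smul]
    simp only [← _root_.map_smul]
    rw [← map_sum, euclid_sum_single, ← mul_smul (ι Q x), ι_sq_scalar, algebraMap_smul, hQ,
      smul_smul, smul_smul, ← add_smul]
    congr 1
    field_simp
    ring
  · unfold diracOp
    have hinner : ∀ i : Fin n,
        (inner ℝ x (EuclideanSpace.single i (1 : ℝ)) : ℝ) = x i := by
      intro i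
      simpa using EuclideanSpace.inner_single_right (𝕜 := ℝ) i 1 x
    have h2 := (hasFDerivAt_log_norm x hx).smul_const γ
    rw [h2.fderiv]
    simp only [ContinuousLinearMap.smulRight_apply, ContinuousLinearMap.smul_apply,
      innerSL_apply_apply, hinner, smul_eq_mul]
    have step : ∀ i : Fin n,
        ι Q (EuclideanSpace.single i (1 : ℝ)) • (((‖x‖ ^ 2)⁻¹ * x i) • γ)
          = ((‖x‖ ^ 2)⁻¹ : ℝ) • ((x i • ι Q (EuclideanSpace.single i (1 : ℝ))) • γ) := by
      intro i
      rw [mul_smul, cl_smul_comm, cl_smul_comm, smul_assoc]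
    simp only [step]
    rw [← Finset.smul_sum, ← Finset.sum_smul]
    simp only [← _root_.map_smul]
    rw [← map_sum, euclid_sum_single]
end
end

section
/- Let m ≥ 1, let i_1, …, i_m ∈ {1, …, n} be indices, k ∈ ℝ and γ ∈ W a constant spinor. Then for every x ≠ 0 the Euclidean Dirac operator applied to the function x ↦ −x_{i_1}⋯x_{i_m}‖x‖^k (x·γ) at x equals (2m + n + k)·x_{i_1}⋯x_{i_m}‖x‖^k γ + Σ_{j=1}^m x_{i_1}⋯\widehat{x_{i_j}}⋯x_{i_m}‖x‖^k (x·(e_{i_j}·γ)), where the hat denotes omission of the factor x_{i_j}. -/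
noncomputable section

open MeasureTheory Finset CliffordAlgebra

/-- For `m ≥ 1`, indices `i_1, …, i_m`, `k : ℝ` and a constant spinor `γ`,
at every `x ≠ 0`:
`D(−x_{i_1}⋯x_{i_m}‖x‖^k (x·γ)) = (2m+n+k)·x_{i_1}⋯x_{i_m}‖x‖^k γ
  + ∑_j x_{i_1}⋯\hat{x_{i_j}}⋯x_{i_m}‖x‖^k (x·(e_{i_j}·γ))`. -/
theorem diracOp_monomial_type_one {n : ℕ} (hn : 2 ≤ n)
    (Q : QuadraticForm ℝ (EuclideanSpace ℝ (Fin n)))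
    (hQ : ∀ v : EuclideanSpace ℝ (Fin n), Q v = -‖v‖ ^ 2)
    (W : Type*) [NormedAddCommGroup W] [NormedSpace ℂ W]
    [Module (CliffordAlgebra Q) W] [IsScalarTower ℝ (CliffordAlgebra Q) W]
    [SMulCommClass ℂ (CliffordAlgebra Q) W] [FiniteDimensional ℂ W]
    (m : ℕ) (hm : 1 ≤ m) (idx : Fin m → Fin n) (k : ℝ) (γ : W)
    (x : EuclideanSpace ℝ (Fin n)) (hx : x ≠ 0) :
    diracOp Q (fun y => -(((∏ j, y (idx j)) * ‖y‖ ^ k) • ((CliffordAlgebra.ι Q y) • γ))) x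
      = ((2 * m + n + k) * ((∏ j, x (idx j)) * ‖x‖ ^ k)) • γ
        + ∑ j : Fin m,
            ((∏ l ∈ Finset.univ.erase j, x (idx l)) * ‖x‖ ^ k) •
              ((CliffordAlgebra.ι Q x) •
                ((CliffordAlgebra.ι Q (EuclideanSpace.single (idx j) (1 : ℝ))) • γ)) := by
  classical
  have hxn : (0:ℝ) < ‖x‖ := norm_pos_iff.mpr hx
  have hx2 : (0:ℝ) < ‖x‖ ^ 2 := by positivity
  -- notation
  set e : Fin n → EuclideanSpace ℝ (Fin n) := fun i => EuclideanSpace.single i (1:ℝ) with he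
  set P : ℝ := ∏ j, x (idx j) with hPdef
  set r : ℝ := ‖x‖ ^ k with hrdef
  set c0 : ℝ := (k/2) * (‖x‖^2) ^ (k/2 - 1) with hc0
  -- scalars commute with Clifford action
  have hcomm : ∀ (a : ℝ) (c : CliffordAlgebra Q) (v : W), c • a • v = a • c • v := by
    intro a c v
    rw [← algebraMap_smul (CliffordAlgebra Q) a v, ← mul_smul, ← Algebra.commutes, mul_smul,
      algebraMap_smul]
  -- basis expansion
  have hsum : ∑ i : Fin n, x i • e i = x := by
    have h := (EuclideanSpace.basisFun (Fin n) ℝ).sum_repr x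
    simpa [he, EuclideanSpace.basisFun_apply, EuclideanSpace.basisFun_repr] using h
  have h1 : ∀ w : W, ∑ i : Fin n, x i • ((ι Q (e i)) • w) = (ι Q x) • w := by
    intro w
    calc ∑ i : Fin n, x i • ((ι Q (e i)) • w) = ∑ i : Fin n, (x i • ι Q (e i)) • w := by
          simp [smul_assoc]
      _ = (∑ i : Fin n, x i • ι Q (e i)) • w := by rw [Finset.sum_smul]
      _ = (ι Q x) • w := by
          congr 1
          calc ∑ i : Fin n, x i • ι Q (e i) = ∑ i : Fin n, ι Q (x i • e i) := by
                simp [_root_.map_smul]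
            _ = ι Q (∑ i : Fin n, x i • e i) := (map_sum _ _ _).symm
            _ = ι Q x := by rw [hsum]
  have hQe : ∀ i : Fin n, Q (e i) = -1 := by
    intro i
    simp [hQ, he, EuclideanSpace.norm_single]
  have h3 : ∀ (i : Fin n) (w : W), ι Q (e i) • (ι Q (e i) • w) = (-1:ℝ) • w := by
    intro i w
    rw [← mul_smul, ι_sq_scalar, hQe, algebraMap_smul]
  have h4 : ∀ w : W, ι Q x • (ι Q x • w) = (-(‖x‖^2) : ℝ) • w := by
    intro w
    rw [← mul_smul, ι_sq_scalar, hQ, algebraMap_smul]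
  have hpolar : ∀ i : Fin n, QuadraticMap.polar Q (e i) x = -(2 * x i) := by
    intro i
    have hinner : @inner ℝ _ _ (e i) x = x i := by
      simp [he, EuclideanSpace.inner_single_left]
    have hni : ‖e i‖ = 1 := by simp [he, EuclideanSpace.norm_single]
    simp only [QuadraticMap.polar, hQ, norm_add_sq_real, hinner, hni]
    ring
  have h5 : ∀ (i : Fin n) (w : W),
      ι Q (e i) • (ι Q x • w) = (-(2 * x i)) • w - ι Q x • (ι Q (e i) • w) := by
    intro i w
    rw [← mul_smul, ι_mul_ι_comm, sub_smul, hpolar, algebraMap_smul, mul_smul]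
  -- derivatives
  have hPd : HasFDerivAt (fun y : EuclideanSpace ℝ (Fin n) => ∏ j : Fin m, y (idx j))
      (∑ j : Fin m, (∏ l ∈ Finset.univ.erase j, x (idx l)) •
        (EuclideanSpace.proj (idx j) : EuclideanSpace ℝ (Fin n) →L[ℝ] ℝ)) x := by
    refine HasFDerivAt.finset_prod (fun j _ => ?_)
    have h := (EuclideanSpace.proj (𝕜 := ℝ) (idx j)).hasFDerivAt (x := x)
    exact h
  have hrd : HasFDerivAt (fun y : EuclideanSpace ℝ (Fin n) => ‖y‖ ^ k)
      (c0 • (2 • (innerSL ℝ x))) x := by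
    have hsq : HasFDerivAt (fun y : EuclideanSpace ℝ (Fin n) => ‖y‖ ^ 2)
        (2 • (innerSL ℝ x)) x := (hasStrictFDerivAt_norm_sq x).hasFDerivAt
    have hrpow : HasDerivAt (fun t : ℝ => t ^ (k/2)) c0 (‖x‖^2) := by
      rw [hc0]
      exact Real.hasDerivAt_rpow_const (Or.inl (ne_of_gt hx2))
    have h := hrpow.comp_hasFDerivAt x hsq
    have hfun : (fun t : ℝ => t ^ (k/2)) ∘ (fun y : EuclideanSpace ℝ (Fin n) => ‖y‖ ^ 2)
        = fun y : EuclideanSpace ℝ (Fin n) => ‖y‖ ^ k := by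
      funext y
      show ((‖y‖ : ℝ) ^ (2:ℕ)) ^ (k/2) = ‖y‖ ^ k
      rw [← Real.rpow_natCast ‖y‖ 2, ← Real.rpow_mul (norm_nonneg y)]
      congr 1
      push_cast
      ring
    rwa [hfun] at h
  -- the spinor linear map
  let Llin : EuclideanSpace ℝ (Fin n) →ₗ[ℝ] W :=
    { toFun := fun y => (ι Q y) • γ
      map_add' := fun a b => by simp [map_add, add_smul]
      map_smul' := fun c a => by simp [_root_.map_smul, smul_assoc] }
  let L : EuclideanSpace ℝ (Fin n) →L[ℝ] W := Llin.toContinuousLinearMap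
  have hLd : HasFDerivAt (fun y : EuclideanSpace ℝ (Fin n) => (ι Q y) • γ) L x := by
    have h := L.hasFDerivAt (x := x)
    exact h
  set F' : EuclideanSpace ℝ (Fin n) →L[ℝ] ℝ :=
    P • (c0 • (2 • (innerSL ℝ x))) + r • (∑ j : Fin m, (∏ l ∈ Finset.univ.erase j, x (idx l)) •
        (EuclideanSpace.proj (idx j) : EuclideanSpace ℝ (Fin n) →L[ℝ] ℝ)) with hF'
  have hψ : HasFDerivAt
      (fun y => -(((∏ j, y (idx j)) * ‖y‖ ^ k) • ((CliffordAlgebra.ι Q y) • γ)))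
      (-((P * r) • L + F'.smulRight (L x))) x := ((hPd.mul hrd).smul hLd).neg
  -- evaluate the derivative on basis vectors
  have hevalL : ∀ v : EuclideanSpace ℝ (Fin n), L v = (ι Q v) • γ := fun v => rfl
  have hF'e : ∀ i : Fin n, F' (e i)
      = P * (c0 * (2 * x i)) + r * (∑ j : Fin m, (∏ l ∈ Finset.univ.erase j, x (idx l)) * (if idx j = i then 1 else 0)) := by
    intro i
    rw [hF']
    simp only [ContinuousLinearMap.add_apply, ContinuousLinearMap.smul_apply,
      ContinuousLinearMap.coe_sum', Finset.sum_apply, ContinuousLinearMap.coe_smul',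
      Pi.smul_apply, innerSL_apply_apply, smul_eq_mul, PiLp.proj_apply, he,
      EuclideanSpace.single_apply]
    rw [EuclideanSpace.inner_single_right]
    simp only [conj_trivial, mul_one, one_mul]
    ring_nf
  have heval : ∀ i : Fin n, fderiv ℝ
      (fun y => -(((∏ j, y (idx j)) * ‖y‖ ^ k) • ((CliffordAlgebra.ι Q y) • γ))) x (e i)
      = -((F' (e i)) • ((ι Q x) • γ) + (P * r) • ((ι Q (e i)) • γ)) := by
    intro i
    rw [hψ.fderiv]
    simp [ContinuousLinearMap.add_apply, ContinuousLinearMap.smul_apply,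
      ContinuousLinearMap.smulRight_apply, hevalL]
    abel
  -- per-term simplification
  have hterm : ∀ i : Fin n, ι Q (e i) • (fderiv ℝ
      (fun y => -(((∏ j, y (idx j)) * ‖y‖ ^ k) • ((CliffordAlgebra.ι Q y) • γ))) x (e i))
      = (-(P * (c0 * (2 * x i)))) • (ι Q (e i) • (ι Q x • γ))
        + (∑ j : Fin m, (-(r * ((∏ l ∈ Finset.univ.erase j, x (idx l)) *
            (if idx j = i then 1 else 0)))) • (ι Q (e i) • (ι Q x • γ)))
        + (P * r) • γ := by
    intro i
    rw [heval i, hF'e i, smul_neg, smul_add, hcomm, hcomm, h3, neg_add]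
    congr 1
    · rw [← neg_smul, neg_add, add_smul, Finset.mul_sum, ← Finset.sum_neg_distrib,
        Finset.sum_smul]
    · rw [neg_one_smul, smul_neg, neg_neg]
  have hei : ∀ i : Fin n, EuclideanSpace.single i (1:ℝ) = e i := fun i => rfl
  rw [diracOp]
  simp only [hei]
  rw [Finset.sum_congr rfl (fun i _ => hterm i), Finset.sum_add_distrib,
    Finset.sum_add_distrib]
  -- the three sums
  have h2k : ((‖x‖:ℝ)^2) ^ (k/2-1) * ‖x‖^2 = ‖x‖^k := by
    rw [← Real.rpow_natCast ‖x‖ 2, ← Real.rpow_mul (norm_nonneg x), ← Real.rpow_add hxn]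
    congr 1
    push_cast
    ring
  have hS1 : ∑ i : Fin n, (-(P * (c0 * (2 * x i)))) • (ι Q (e i) • (ι Q x • γ))
      = (k * (P * r)) • γ := by
    have hstep : ∀ i : Fin n, (-(P * (c0 * (2 * x i)))) • (ι Q (e i) • (ι Q x • γ))
        = (-(P * c0 * 2)) • (x i • (ι Q (e i) • (ι Q x • γ))) := by
      intro i
      have hsc : -(P * (c0 * (2 * x i))) = (-(P * c0 * 2)) * (x i) := by ring
      rw [hsc, mul_smul]
    rw [Finset.sum_congr rfl (fun i _ => hstep i), ← Finset.smul_sum, h1, h4, smul_smul]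
    congr 1
    rw [hc0, hrdef]
    linear_combination (k * P) * h2k
  have hS3 : ∑ _i : Fin n, (P * r) • γ = ((n:ℝ) * (P * r)) • γ := by
    rw [Finset.sum_const, Finset.card_univ, Fintype.card_fin, ← Nat.cast_smul_eq_nsmul ℝ,
      smul_smul]
  have hS2 : ∑ i : Fin n, ∑ j : Fin m, (-(r * ((∏ l ∈ Finset.univ.erase j, x (idx l)) *
        (if idx j = i then 1 else 0)))) • (ι Q (e i) • (ι Q x • γ))
      = ((m : ℝ) * (2 * (r * P))) • γ
        + ∑ j : Fin m, ((∏ l ∈ Finset.univ.erase j, x (idx l)) * r) •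
            (ι Q x • (ι Q (e (idx j)) • γ)) := by
    rw [Finset.sum_comm]
    have hin : ∀ j : Fin m, ∑ i : Fin n, (-(r * ((∏ l ∈ Finset.univ.erase j, x (idx l)) *
        (if idx j = i then 1 else 0)))) • (ι Q (e i) • (ι Q x • γ))
        = (-(r * (∏ l ∈ Finset.univ.erase j, x (idx l)))) • (ι Q (e (idx j)) • (ι Q x • γ)) := by
      intro j
      rw [Finset.sum_eq_single (idx j)]
      · simp
      · intro i _ hne
        have hne' : idx j ≠ i := fun h => hne h.symm
        simp [hne']
      · intro h
        exact absurd (Finset.mem_univ _) h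
    rw [Finset.sum_congr rfl (fun j _ => hin j)]
    have hsplit : ∀ j : Fin m, (-(r * (∏ l ∈ Finset.univ.erase j, x (idx l)))) •
        (ι Q (e (idx j)) • (ι Q x • γ))
        = (2 * (r * P)) • γ + ((∏ l ∈ Finset.univ.erase j, x (idx l)) * r) •
            (ι Q x • (ι Q (e (idx j)) • γ)) := by
      intro j
      have hPe : (∏ l ∈ Finset.univ.erase j, x (idx l)) * x (idx j) = P := by
        rw [hPdef]
        exact Finset.prod_erase_mul Finset.univ _ (Finset.mem_univ j)
      rw [h5, smul_sub, smul_smul, neg_smul, sub_neg_eq_add]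
      have hA : (-(r * (∏ l ∈ Finset.univ.erase j, x (idx l)))) * (-(2 * x (idx j)))
          = 2 * (r * P) := by
        rw [← hPe]; ring
      rw [hA]
      have hB : (r * (∏ l ∈ Finset.univ.erase j, x (idx l)))
          = ((∏ l ∈ Finset.univ.erase j, x (idx l)) * r) := mul_comm _ _
      rw [hB]
    rw [Finset.sum_congr rfl (fun j _ => hsplit j), Finset.sum_add_distrib, Finset.sum_const,
      Finset.card_univ, Fintype.card_fin, ← Nat.cast_smul_eq_nsmul ℝ, smul_smul]
  rw [hS1, hS2, hS3]
  have hee : ∀ j : Fin m, EuclideanSpace.single (idx j) (1:ℝ) = e (idx j) := fun j => rfl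
  simp only [hee]
  module
end
end

section
/- Define f_k : ℝⁿ ∖ {0} → ℝ by f_k(x) = k⁻¹‖x‖^k if k ≠ 0 and f_0(x) = ln‖x‖. Let m ≥ 1, let i_1, …, i_m ∈ {1, …, n} be indices, k ∈ ℝ and γ ∈ W a constant spinor. Then for every x ≠ 0 the Euclidean Dirac operator applied to the function x ↦ x_{i_1}⋯x_{i_m} f_{k+2}(x) γ at x equals x_{i_1}⋯x_{i_m}‖x‖^k (x·γ) + Σ_{j=1}^m x_{i_1}⋯\widehat{x_{i_j}}⋯x_{i_m} f_{k+2}(x) (e_{i_j}·γ), where the hat denotes omission of the factor x_{i_j}. -/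
noncomputable section

open MeasureTheory Finset CliffordAlgebra

/-- The radial primitive `f_k`: `f_k(x) = k⁻¹‖x‖^k` for `k ≠ 0`,
and `f_0(x) = ln‖x‖`. -/
def radialPrimitive {n : ℕ} (k : ℝ) (x : EuclideanSpace ℝ (Fin n)) : ℝ :=
  if k = 0 then Real.log ‖x‖ else k⁻¹ * ‖x‖ ^ k

lemma hasFDerivAt_radialPrimitive {n : ℕ} (k : ℝ) (x : EuclideanSpace ℝ (Fin n)) (hx : x ≠ 0) :
    HasFDerivAt (radialPrimitive (k + 2)) ((‖x‖ ^ k) • (innerSL ℝ x)) x := by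
  have hnorm : ‖x‖ ≠ 0 := norm_ne_zero_iff.mpr hx
  have hpos : (0:ℝ) < ‖x‖ := norm_pos_iff.mpr hx
  have hsq : (‖x‖ ^ 2 : ℝ) ≠ 0 := pow_ne_zero 2 hnorm
  have hsqF : HasFDerivAt (fun y : EuclideanSpace ℝ (Fin n) => ‖y‖ ^ 2)
      (2 • (innerSL ℝ x)) x := (hasStrictFDerivAt_norm_sq x).hasFDerivAt
  by_cases hk : k + 2 = 0
  · -- log case
    have hfun : (radialPrimitive (k + 2) : EuclideanSpace ℝ (Fin n) → ℝ)
        = fun y => (1/2 : ℝ) * Real.log (‖y‖ ^ 2) := by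
      funext y
      simp only [radialPrimitive, if_pos hk, Real.log_pow]
      push_cast; ring
    have hlog : HasDerivAt Real.log (‖x‖ ^ 2)⁻¹ (‖x‖ ^ 2) := Real.hasDerivAt_log hsq
    have := (hlog.comp_hasFDerivAt x hsqF).const_mul (1/2 : ℝ)
    rw [hfun]
    refine HasFDerivAt.congr_fderiv this ?_
    have hk' : k = -2 := by linarith
    ext v
    simp only [ContinuousLinearMap.smul_apply, ContinuousLinearMap.coe_smul', Pi.smul_apply,
      smul_eq_mul]
    rw [hk', Real.rpow_neg (norm_nonneg x)]
    rw [show ((2:ℝ):ℝ) = ((2:ℕ):ℝ) by norm_num, Real.rpow_natCast]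
    ring
  · -- rpow case
    have hfun : (radialPrimitive (k + 2) : EuclideanSpace ℝ (Fin n) → ℝ)
        = fun y => (k+2)⁻¹ * (‖y‖ ^ 2) ^ ((k+2)/2) := by
      funext y
      simp only [radialPrimitive, if_neg hk]
      congr 1
      rw [← Real.rpow_natCast ‖y‖ 2, ← Real.rpow_mul (norm_nonneg y)]
      congr 1
      push_cast; ring
    have hrpow : HasDerivAt (fun t : ℝ => t ^ ((k+2)/2))
        (((k+2)/2) * (‖x‖ ^ 2) ^ ((k+2)/2 - 1)) (‖x‖ ^ 2) :=
      Real.hasDerivAt_rpow_const (Or.inl hsq)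
    have := (hrpow.comp_hasFDerivAt x hsqF).const_mul ((k+2)⁻¹ : ℝ)
    rw [hfun]
    refine HasFDerivAt.congr_fderiv this ?_
    ext v
    simp only [ContinuousLinearMap.smul_apply, ContinuousLinearMap.coe_smul', Pi.smul_apply,
      smul_eq_mul]
    have h1 : (‖x‖ ^ 2 : ℝ) ^ ((k+2)/2 - 1) = ‖x‖ ^ k := by
      rw [← Real.rpow_natCast ‖x‖ 2, ← Real.rpow_mul (norm_nonneg x)]
      congr 1
      push_cast; ring
    rw [h1]
    field_simp
    ring

/-- For `m ≥ 1`, indices `i_1, …, i_m`, `k : ℝ` and a constant spinor `γ`,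
at every `x ≠ 0`:
`D(x_{i_1}⋯x_{i_m} f_{k+2}(x) γ) = x_{i_1}⋯x_{i_m}‖x‖^k (x·γ)
  + ∑_j x_{i_1}⋯\hat{x_{i_j}}⋯x_{i_m} f_{k+2}(x) (e_{i_j}·γ)`. -/
theorem diracOp_monomial_type_zero {n : ℕ} (hn : 2 ≤ n)
    (Q : QuadraticForm ℝ (EuclideanSpace ℝ (Fin n)))
    (hQ : ∀ v : EuclideanSpace ℝ (Fin n), Q v = -‖v‖ ^ 2)
    (W : Type*) [NormedAddCommGroup W] [NormedSpace ℂ W]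
    [Module (CliffordAlgebra Q) W] [IsScalarTower ℝ (CliffordAlgebra Q) W]
    [SMulCommClass ℂ (CliffordAlgebra Q) W] [FiniteDimensional ℂ W]
    (m : ℕ) (hm : 1 ≤ m) (idx : Fin m → Fin n) (k : ℝ) (γ : W)
    (x : EuclideanSpace ℝ (Fin n)) (hx : x ≠ 0) :
    diracOp Q (fun y => ((∏ j, y (idx j)) * radialPrimitive (k + 2) y) • γ) x
      = ((∏ j, x (idx j)) * ‖x‖ ^ k) • ((CliffordAlgebra.ι Q x) • γ)
        + ∑ j : Fin m,
            ((∏ l ∈ Finset.univ.erase j, x (idx l)) * radialPrimitive (k + 2) x) •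
              ((CliffordAlgebra.ι Q (EuclideanSpace.single (idx j) (1 : ℝ))) • γ) := by
  classical
  have hP : HasFDerivAt (𝕜 := ℝ) (fun y : EuclideanSpace ℝ (Fin n) => ∏ j : Fin m, (y (idx j) : ℝ))
      (∑ j : Fin m, (∏ l ∈ Finset.univ.erase j, x (idx l)) • EuclideanSpace.proj (idx j)) x :=
    HasFDerivAt.finset_prod (fun j _ =>
      ((EuclideanSpace.proj (idx j) : EuclideanSpace ℝ (Fin n) →L[ℝ] ℝ).hasFDerivAt :
        HasFDerivAt (fun y : EuclideanSpace ℝ (Fin n) => (y (idx j) : ℝ)) _ x))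
  have hf := hasFDerivAt_radialPrimitive k x hx
  have hg := hP.mul hf
  have hψ := hg.smul_const γ
  have hfd := hψ.fderiv
  unfold diracOp
  rw [show (fun y : EuclideanSpace ℝ (Fin n) => ((∏ j, y (idx j)) * radialPrimitive (k + 2) y) • γ) = fun y => (((fun y : EuclideanSpace ℝ (Fin n) => ∏ j, y (idx j)) * radialPrimitive (k + 2) : EuclideanSpace ℝ (Fin n) → ℝ) y) • γ from rfl, hfd]
  have hsc : ∀ (c : ℝ) (a : CliffordAlgebra Q) (w : W), a • (c • w) = c • (a • w) :=
    fun c a w => (smul_comm c a w).symm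
  have hinner : ∀ i : Fin n, (inner ℝ x (EuclideanSpace.single i (1:ℝ)) : ℝ) = x i := by
    intro i
    rw [EuclideanSpace.inner_single_right]
    simp
  have hxdec : (∑ i : Fin n, x i • EuclideanSpace.single i (1:ℝ)) = x := by
    ext j
    rw [show ((∑ i : Fin n, x i • EuclideanSpace.single i (1:ℝ)) j)
        = ∑ i : Fin n, (x i • EuclideanSpace.single i (1:ℝ)) j from
      by rw [WithLp.ofLp_sum, Finset.sum_apply]]
    simp [EuclideanSpace.single_apply, Finset.sum_ite_eq', smul_eq_mul]
  have hiota : (CliffordAlgebra.ι Q) x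
      = ∑ i : Fin n, x i • (CliffordAlgebra.ι Q) (EuclideanSpace.single i (1:ℝ)) := by
    conv_lhs => rw [← hxdec]
    rw [map_sum]
    exact Finset.sum_congr rfl fun i _ => map_smul _ _ _
  simp only [ContinuousLinearMap.smulRight_apply, ContinuousLinearMap.add_apply,
    ContinuousLinearMap.smul_apply, ContinuousLinearMap.sum_apply, innerSL_apply_apply,
    PiLp.proj_apply, smul_eq_mul, EuclideanSpace.single_apply, hinner, add_smul,
    smul_add, hsc, Finset.sum_add_distrib]
  congr 1
  · -- radial part
    rw [hiota, Finset.sum_smul, Finset.smul_sum]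
    refine Finset.sum_congr rfl fun i _ => ?_
    rw [smul_assoc, smul_smul]
    congr 1
    ring
  · -- monomial part
    simp only [Finset.mul_sum, Finset.sum_smul]
    rw [Finset.sum_comm]
    refine Finset.sum_congr rfl fun j _ => ?_
    simp only [mul_ite, mul_one, mul_zero, ite_smul, zero_smul]
    rw [Finset.sum_ite_eq]
    simp [mul_comm]
end
end

section
/- There is no commuting real structure on Σ₂: no additive, conjugate-linear map J : ℂ² → ℂ² with J∘J = id satisfies J(E₁·v) = E₁·J(v) and J(E₂·v) = E₂·J(v) for all v ∈ ℂ². -/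
noncomputable section

open Matrix Complex

/-- `E₁ = !![0, −1; 1, 0]`, acting on the spinor module `Σ₂ = ℂ²`. -/
def E₁ : Matrix (Fin 2) (Fin 2) ℂ := !![0, -1; 1, 0]

/-- `E₂ = !![0, i; i, 0]`, acting on the spinor module `Σ₂ = ℂ²`. -/
def E₂ : Matrix (Fin 2) (Fin 2) ℂ := !![0, Complex.I; Complex.I, 0]

/-- There is no commuting real structure on `Σ₂`: no additive,
conjugate-linear map `J : ℂ² → ℂ²` with `J∘J = id` commutes with the
actions of both `E₁` and `E₂`. -/
theorem no_commuting_real_structure_dim2 :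
    ¬ ∃ J : (Fin 2 → ℂ) → (Fin 2 → ℂ),
      (∀ v w : Fin 2 → ℂ, J (v + w) = J v + J w) ∧
      (∀ (c : ℂ) (v : Fin 2 → ℂ), J (c • v) = (starRingEnd ℂ) c • J v) ∧
      (∀ v : Fin 2 → ℂ, J (J v) = v) ∧
      (∀ v : Fin 2 → ℂ, J (E₁.mulVec v) = E₁.mulVec (J v)) ∧
      (∀ v : Fin 2 → ℂ, J (E₂.mulVec v) = E₂.mulVec (J v)) := by
  rintro ⟨J, hadd, hsmul, hJJ, h1, h2⟩
  set e0 : Fin 2 → ℂ := ![1, 0] with he0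
  set e1 : Fin 2 → ℂ := ![0, 1] with he1
  set u := J e0 with hu
  set v := J e1 with hv
  -- E₁ e0 = e1
  have m1 : E₁.mulVec e0 = e1 := by
    funext i; fin_cases i <;>
      simp [E₁, he0, he1, mulVec, dotProduct, Fin.sum_univ_two]
  have m2 : E₂.mulVec e0 = Complex.I • e1 := by
    funext i; fin_cases i <;>
      simp [E₂, he0, he1, mulVec, dotProduct, Fin.sum_univ_two]
  have eq1 : v = E₁.mulVec u := by
    have := h1 e0; rwa [m1] at this
  have eq2 : (starRingEnd ℂ) Complex.I • v = E₂.mulVec u := by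
    have := h2 e0; rw [m2, hsmul] at this; exact this
  -- components
  have c1 : v 1 = u 0 := by
    have := congrFun eq1 1
    simpa [E₁, mulVec, dotProduct, Fin.sum_univ_two] using this
  have c2 : v 0 = -u 1 := by
    have := congrFun eq1 0
    simpa [E₁, mulVec, dotProduct, Fin.sum_univ_two] using this
  have c3 : v 1 = -u 0 := by
    have := congrFun eq2 1
    simp [E₂, mulVec, dotProduct, Fin.sum_univ_two, Complex.conj_I] at this
    have h' : Complex.I * v 1 = Complex.I * (-u 0) := by linear_combination -this
    exact mul_left_cancel₀ Complex.I_ne_zero h'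
  have hu0 : u 0 = 0 := by
    have := c1.symm.trans c3
    -- u 0 = - u 0
    linear_combination (1/2 : ℂ) * this
  -- decomposition of u
  have hdec : u = u 0 • e0 + u 1 • e1 := by
    funext i; fin_cases i <;> simp [he0, he1]
  have hJu : J u = (starRingEnd ℂ) (u 0) • u + (starRingEnd ℂ) (u 1) • v := by
    conv_lhs => rw [hdec]
    rw [hadd, hsmul, hsmul, ← hu, ← hv]
  have hJue : J u = e0 := by rw [hu]; exact hJJ e0
  have key : (starRingEnd ℂ) (u 1) * v 0 = 1 := by
    have := congrFun (hJu.symm.trans hJue) 0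
    simp [he0, hu0] at this
    exact this
  rw [c2] at key
  have : -((Complex.normSq (u 1) : ℂ)) = 1 := by
    linear_combination key - Complex.normSq_eq_conj_mul_self (z := u 1)
  have hre := congrArg Complex.re this
  simp at hre
  nlinarith [Complex.normSq_nonneg (u 1), hre]
end
end

section
/- There is no commuting real structure on Σ₃: no additive, conjugate-linear map J : ℂ² → ℂ² with J∘J = id satisfies J(Eₐ·v) = Eₐ·J(v) for all v ∈ ℂ² and all a ∈ {1,2,3}. -/
noncomputable section

open Matrix Complex

/-- The matrices `E₁ = !![i, 0; 0, −i]`, `E₂ = !![0, −1; 1, 0]`,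
`E₃ = !![0, −i; −i, 0]`, acting on the spinor module `Σ₃ = ℂ²`. -/
def E3 : Fin 3 → Matrix (Fin 2) (Fin 2) ℂ :=
  ![!![Complex.I, 0; 0, -Complex.I],
    !![0, -1; 1, 0],
    !![0, -Complex.I; -Complex.I, 0]]

/-- There is no commuting real structure on `Σ₃`: no additive,
conjugate-linear map `J : ℂ² → ℂ²` with `J∘J = id` commutes with the
actions of all of `E₁`, `E₂`, `E₃`. -/
theorem no_commuting_real_structure_dim3 :
    ¬ ∃ J : (Fin 2 → ℂ) → (Fin 2 → ℂ),
      (∀ v w : Fin 2 → ℂ, J (v + w) = J v + J w) ∧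
      (∀ (c : ℂ) (v : Fin 2 → ℂ), J (c • v) = (starRingEnd ℂ) c • J v) ∧
      (∀ v : Fin 2 → ℂ, J (J v) = v) ∧
      (∀ (a : Fin 3) (v : Fin 2 → ℂ), J ((E3 a).mulVec v) = (E3 a).mulVec (J v)) := by
  rintro ⟨J, hadd, hsmul, hJJ, hcomm⟩
  set e0 : Fin 2 → ℂ := ![1, 0] with he0
  set e1 : Fin 2 → ℂ := ![0, 1] with he1
  set u : Fin 2 → ℂ := J e0 with hu
  -- E₁ e₀ = I • e₀
  have h1 : (E3 0).mulVec e0 = Complex.I • e0 := by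
    funext i; fin_cases i <;>
      simp [E3, he0, Matrix.mulVec, dotProduct, Fin.sum_univ_two]
  have h1' := hcomm 0 e0
  rw [h1, hsmul] at h1'
  have hu0 : u 0 = 0 := by
    have h := congr_fun h1' 0
    simp [E3, Matrix.mulVec, dotProduct, Fin.sum_univ_two, Complex.conj_I, ← hu] at h
    linear_combination (Complex.I / 2) * h + u 0 * Complex.I_sq
  -- E₂ e₀ = e₁, so J e₁ = E₂ u
  have h2 : (E3 1).mulVec e0 = e1 := by
    funext i; fin_cases i <;>
      simp [E3, he0, he1, Matrix.mulVec, dotProduct, Fin.sum_univ_two]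
  have hJe1 : J e1 = (E3 1).mulVec u := by
    have := hcomm 1 e0
    rw [h2] at this
    exact this
  -- u = u 1 • e₁
  have hue : u = u 1 • e1 := by
    funext i; fin_cases i <;> simp [he1, hu0]
  -- J u = e₀
  have hJu := hJJ e0
  rw [← hu, hue, hsmul, hJe1] at hJu
  have h := congr_fun hJu 0
  simp [E3, Matrix.mulVec, dotProduct, Fin.sum_univ_two, he0] at h
  -- h : conj (u 1) * (-(u 1)) = 1  (roughly)
  have hsq : ((Complex.normSq (u 1) : ℂ)) = -1 := by
    rw [← Complex.mul_conj (u 1)]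
    linear_combination -h
  have h2' : Complex.normSq (u 1) = -1 := by
    exact_mod_cast hsq
  have := Complex.normSq_nonneg (u 1)
  linarith
end
end

section
/- Weak holomorphy implies strong holomorphy for Banach-space-valued functions: let X be a complex Banach space, Ω ⊆ ℂ open, and u : ℂ → X a function such that for every continuous linear functional f : X →L[ℂ] ℂ the scalar function z ↦ f(u(z)) is holomorphic on Ω (complex-differentiable at every point of Ω). Then u is holomorphic on Ω, i.e. u is complex-differentiable at every point of Ω. -/
noncomputable section

open Metric Set NormedSpace

/-- Weak holomorphy implies strong holomorphy for Banach-space-valued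
functions: if `X` is a complex Banach space, `Ω ⊆ ℂ` is open, and
`u : ℂ → X` is such that `z ↦ f (u z)` is holomorphic on `Ω` for every
continuous linear functional `f : X →L[ℂ] ℂ`, then `u` is complex-
differentiable at every point of `Ω`. -/
theorem weak_holomorphy_implies_holomorphy
    (X : Type*) [NormedAddCommGroup X] [NormedSpace ℂ X] [CompleteSpace X]
    (Ω : Set ℂ) (hΩ : IsOpen Ω) (u : ℂ → X)
    (h : ∀ f : X →L[ℂ] ℂ, ∀ z ∈ Ω, DifferentiableAt ℂ (fun z => f (u z)) z) :
    ∀ z ∈ Ω, DifferentiableAt ℂ u z := by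
  intro z₀ hz₀
  obtain ⟨r, hr0, hrΩ⟩ : ∃ r > 0, closedBall z₀ r ⊆ Ω := by
    rcases Metric.isOpen_iff.mp hΩ z₀ hz₀ with ⟨ε, hε, hsub⟩
    exact ⟨ε / 2, half_pos hε, (closedBall_subset_ball (by linarith)).trans hsub⟩
  set ρ : ℝ := r / 2 with hρdef
  have hρ0 : 0 < ρ := half_pos hr0
  have hsub2 : closedBall z₀ ρ ⊆ closedBall z₀ r :=
    closedBall_subset_closedBall (by simp [hρdef]; linarith)
  -- Step 1: for each functional `f`, `f ∘ u` is Lipschitz on the small closed ball.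
  have step1 : ∀ f : X →L[ℂ] ℂ, ∃ M : ℝ, ∀ w ∈ closedBall z₀ ρ, ∀ w' ∈ closedBall z₀ ρ,
      ‖f (u w) - f (u w')‖ ≤ M * ‖w - w'‖ := by
    intro f
    have hcont : ContinuousOn (fun z => f (u z)) (closedBall z₀ r) := fun z hz =>
      ((h f z (hrΩ hz)).continuousAt).continuousWithinAt
    obtain ⟨M, hM⟩ := (isCompact_closedBall z₀ r).exists_bound_of_continuousOn hcont
    refine ⟨M / ρ, fun w hw w' hw' => ?_⟩
    have hder : ∀ x ∈ closedBall z₀ ρ, ‖deriv (fun z => f (u z)) x‖ ≤ M / ρ := by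
      intro x hx
      have hball : closedBall x ρ ⊆ closedBall z₀ r := by
        intro y hy
        rw [mem_closedBall] at *
        calc dist y z₀ ≤ dist y x + dist x z₀ := dist_triangle _ _ _
          _ ≤ ρ + ρ := add_le_add hy hx
          _ = r := by rw [hρdef]; ring
      refine Complex.norm_deriv_le_of_forall_mem_sphere_norm_le hρ0 ?_ ?_
      · refine DifferentiableOn.diffContOnCl ?_
        rw [closure_ball x hρ0.ne']
        exact fun y hy => (h f y (hrΩ (hball hy))).differentiableWithinAt
      · exact fun z hz => hM z (hball (sphere_subset_closedBall hz))
    exact Convex.norm_image_sub_le_of_norm_deriv_le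
      (fun x hx => h f x (hrΩ (hsub2 hx))) hder (convex_closedBall _ _) hw' hw
  -- Step 2: Banach–Steinhaus gives a uniform Lipschitz bound for `u`.
  obtain ⟨C, hC⟩ : ∃ C : ℝ, ∀ w ∈ closedBall z₀ ρ, ∀ w' ∈ closedBall z₀ ρ,
      ‖u w - u w'‖ ≤ C * ‖w - w'‖ := by
    set ι := {p : ℂ × ℂ // p.1 ∈ closedBall z₀ ρ ∧ p.2 ∈ closedBall z₀ ρ ∧ p.1 ≠ p.2}
    set g : ι → (StrongDual ℂ X) →L[ℂ] ℂ := fun i =>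
      inclusionInDoubleDual ℂ X ((i.1.1 - i.1.2)⁻¹ • (u i.1.1 - u i.1.2))
    have hpt : ∀ f : StrongDual ℂ X, ∃ C, ∀ i, ‖g i f‖ ≤ C := by
      intro f
      obtain ⟨M, hM⟩ := step1 f
      refine ⟨M, fun i => ?_⟩
      obtain ⟨⟨w, w'⟩, hw, hw', hne⟩ := i
      have hne' : w - w' ≠ 0 := sub_ne_zero.mpr hne
      have : g ⟨(w, w'), hw, hw', hne⟩ f = (w - w')⁻¹ * (f (u w) - f (u w')) := by
        simp [g, dual_def, map_smul, map_sub, smul_eq_mul]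
      rw [this, norm_mul, norm_inv]
      have h1 : ‖f (u w) - f (u w')‖ ≤ M * ‖w - w'‖ := hM w hw w' hw'
      have h2 : (0 : ℝ) < ‖w - w'‖ := norm_pos_iff.mpr hne'
      calc ‖w - w'‖⁻¹ * ‖f (u w) - f (u w')‖ ≤ ‖w - w'‖⁻¹ * (M * ‖w - w'‖) := by
            exact mul_le_mul_of_nonneg_left h1 (by positivity)
        _ = M := by
            field_simp
    obtain ⟨C, hBS⟩ := banach_steinhaus hpt
    refine ⟨C, fun w hw w' hw' => ?_⟩
    by_cases hne : w = w'
    · simp [hne]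
    · have hi : ((w, w') : ℂ × ℂ) ∈ {p : ℂ × ℂ | p.1 ∈ closedBall z₀ ρ ∧
        p.2 ∈ closedBall z₀ ρ ∧ p.1 ≠ p.2} := ⟨hw, hw', hne⟩
      have hnorm : ‖g ⟨(w, w'), hw, hw', hne⟩‖ = ‖(w - w')⁻¹ • (u w - u w')‖ :=
        (inclusionInDoubleDualLi ℂ (E := X)).norm_map _
      have hle : ‖(w - w')⁻¹ • (u w - u w')‖ ≤ C := hnorm ▸ hBS ⟨(w, w'), hw, hw', hne⟩
      have hne' : w - w' ≠ 0 := sub_ne_zero.mpr hne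
      have h2 : (0 : ℝ) < ‖w - w'‖ := norm_pos_iff.mpr hne'
      rw [norm_smul, norm_inv] at hle
      calc ‖u w - u w'‖ = ‖w - w'‖ * (‖w - w'‖⁻¹ * ‖u w - u w'‖) := by
            field_simp
        _ ≤ ‖w - w'‖ * C := mul_le_mul_of_nonneg_left hle h2.le
        _ = C * ‖w - w'‖ := mul_comm _ _
  -- hence `u` is continuous on the small closed ball
  have hcontu : ContinuousOn u (closedBall z₀ ρ) := by
    refine LipschitzOnWith.continuousOn (K := Real.toNNReal C) ?_
    refine LipschitzOnWith.of_dist_le_mul fun x hx y hy => ?_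
    have := hC x hx y hy
    rw [dist_eq_norm, dist_eq_norm]
    calc ‖u x - u y‖ ≤ C * ‖x - y‖ := this
      _ ≤ Real.toNNReal C * ‖x - y‖ :=
          mul_le_mul_of_nonneg_right (Real.le_coe_toNNReal C) (norm_nonneg _)
  -- Step 3: Cauchy integral representation.
  lift ρ to NNReal using hρ0.le with R hR
  have hR0 : 0 < R := by exact_mod_cast hρ0
  have hci : CircleIntegrable u z₀ R :=
    ContinuousOn.circleIntegrable hρ0.le (hcontu.mono sphere_subset_closedBall)
  have hps := hasFPowerSeriesOn_cauchy_integral (f := u) (c := z₀) (R := R) hci hR0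
  set v : ℂ → X := fun w => (2 * Real.pi * Complex.I : ℂ)⁻¹ •
    ∮ z in C(z₀, (R : ℝ)), (z - w)⁻¹ • u z with hv
  have hvdiff : DifferentiableAt ℂ v z₀ := by
    have := hps.analyticAt
    exact this.differentiableAt
  -- the two functions agree on the ball
  have heq : ∀ w ∈ ball z₀ (R : ℝ), v w = u w := by
    intro w hw
    refine (eq_iff_forall_dual_eq ℂ).mpr fun f => ?_
    -- integrability of the Cauchy kernel integrand
    have hker : CircleIntegrable (fun z => (z - w)⁻¹ • u z) z₀ R := by
      refine ContinuousOn.circleIntegrable hρ0.le ?_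
      refine ContinuousOn.smul ?_ (hcontu.mono sphere_subset_closedBall)
      refine ContinuousOn.inv₀ (by fun_prop) fun z hz => sub_ne_zero.mpr fun hzw => ?_
      rw [mem_sphere] at hz
      rw [hzw] at hz
      exact (mem_ball.mp hw).ne hz
    -- pull `f` inside the integral
    have hfint : f (∮ z in C(z₀, (R : ℝ)), (z - w)⁻¹ • u z)
        = ∮ z in C(z₀, (R : ℝ)), (z - w)⁻¹ • f (u z) := by
      rw [circleIntegral, circleIntegral, ← ContinuousLinearMap.intervalIntegral_comp_comm f hker.out]
      congr 1
      ext θ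
      simp [map_smul, smul_eq_mul]
    have hd : DiffContOnCl ℂ (fun z => f (u z)) (ball z₀ (R : ℝ)) := by
      refine DifferentiableOn.diffContOnCl ?_
      rw [closure_ball z₀ hρ0.ne']
      exact fun y hy => (h f y (hrΩ (hsub2 hy))).differentiableWithinAt
    have := hd.two_pi_i_inv_smul_circleIntegral_sub_inv_smul hw
    rw [hv]
    simp only [map_smul, hfint, smul_eq_mul] at this ⊢
    exact this
  have hmem : ball z₀ (R : ℝ) ∈ nhds z₀ := ball_mem_nhds z₀ hR0
  have hev : u =ᶠ[nhds z₀] v :=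
    Filter.eventuallyEq_of_mem hmem fun w hw => (heq w hw).symm
  exact hvdiff.congr_of_eventuallyEq hev
end
end

section
/- Weak holomorphy implies holomorphy in operator norm for families of bounded operators: let X, Y be complex Banach spaces, Ω ⊆ ℂ open, and D : ℂ → (X →L[ℂ] Y) a family of bounded linear operators such that for every u ∈ X and every continuous linear functional g : Y →L[ℂ] ℂ the scalar function z ↦ g(D(z)u) is holomorphic on Ω. Then D is holomorphic on Ω with respect to the operator-norm topology, i.e. D : ℂ → (X →L[ℂ] Y) is complex-differentiable at every point of Ω. -/
noncomputable section

open Metric Set Complex Real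

lemma cauchy_three_aux {f : ℂ → ℂ} {z₀ : ℂ} {R M : ℝ} (hR : 0 < R)
    (hf : ∀ x ∈ closedBall z₀ R, DifferentiableAt ℂ f x)
    (hM : ∀ ζ ∈ sphere z₀ R, ‖f ζ‖ ≤ M)
    {z w : ℂ} (hz : z ∈ ball z₀ (R / 2)) (hw : w ∈ ball z₀ (R / 2)) :
    ‖(w - z₀) * (f z - f z₀) - (z - z₀) * (f w - f z₀)‖ ≤
      4 * M / R ^ 2 * (‖z - z₀‖ * ‖w - z₀‖ * ‖z - w‖) := by
  have hsub : ball z₀ (R / 2) ⊆ ball z₀ R := ball_subset_ball (by linarith)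
  have hz' := hsub hz
  have hw' := hsub hw
  have hz₀ : z₀ ∈ ball z₀ R := mem_ball_self hR
  have hc : ContinuousOn f (closedBall z₀ R) := fun x hx =>
    ((hf x hx).continuousAt).continuousWithinAt
  -- points on the sphere are away from points in balls
  have hdist : ∀ a ∈ ball z₀ (R / 2), ∀ ζ ∈ sphere z₀ R, R / 2 ≤ ‖ζ - a‖ := by
    intro a ha ζ hζ
    have h1 : dist ζ z₀ = R := mem_sphere.mp hζ
    have h2 : dist a z₀ < R / 2 := mem_ball.mp ha
    have := dist_triangle ζ a z₀
    rw [← dist_eq_norm]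
    linarith
  have hne : ∀ a ∈ ball z₀ R, ∀ ζ ∈ sphere z₀ R, ζ - a ≠ 0 := by
    intro a ha ζ hζ h
    have h1 : dist ζ z₀ = R := mem_sphere.mp hζ
    have h2 : dist a z₀ < R := mem_ball.mp ha
    have : ζ = a := by linear_combination h
    rw [this] at h1; linarith
  -- Cauchy integral formula
  have CF : ∀ a ∈ ball z₀ R,
      (∮ ζ in C(z₀, R), (ζ - a)⁻¹ • f ζ) = (2 * π * I : ℂ) • f a := fun a ha =>
    circleIntegral_sub_inv_smul_of_differentiable_on_off_countable countable_empty ha hc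
      (fun x hx => hf x (ball_subset_closedBall hx.1))
  have hInt : ∀ (c a : ℂ), a ∈ ball z₀ R →
      CircleIntegrable (fun ζ => c • ((ζ - a)⁻¹ • f ζ)) z₀ R := by
    intro c a ha
    apply ContinuousOn.circleIntegrable hR.le
    apply ContinuousOn.fun_smul continuousOn_const
    apply ContinuousOn.fun_smul
    · exact ContinuousOn.inv₀ (by fun_prop) (fun ζ hζ => hne a ha ζ hζ)
    · exact hc.mono sphere_subset_closedBall
  have hIntsub : ∀ (c a b : ℂ), a ∈ ball z₀ R → b ∈ ball z₀ R →
      CircleIntegrable (fun ζ => c • ((ζ - a)⁻¹ • f ζ) - c • ((ζ - b)⁻¹ • f ζ)) z₀ R :=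
    fun c a b ha hb => (hInt c a ha).sub (hInt c b hb)
  -- the key integral identity
  have key : (∮ ζ in C(z₀, R),
        ((z - z₀) * (w - z₀) * (z - w) / ((ζ - z) * (ζ - w) * (ζ - z₀))) • f ζ)
      = (2 * π * I : ℂ) • ((w - z₀) * (f z - f z₀) - (z - z₀) * (f w - f z₀)) := by
    have e1 : EqOn
        (fun ζ => ((z - z₀) * (w - z₀) * (z - w) / ((ζ - z) * (ζ - w) * (ζ - z₀))) • f ζ)
        (fun ζ => ((w - z₀) • ((ζ - z)⁻¹ • f ζ) - (w - z₀) • ((ζ - z₀)⁻¹ • f ζ)) -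
          ((z - z₀) • ((ζ - w)⁻¹ • f ζ) - (z - z₀) • ((ζ - z₀)⁻¹ • f ζ)))
        (sphere z₀ R) := by
      intro ζ hζ
      have h1 := hne z hz' ζ hζ
      have h2 := hne w hw' ζ hζ
      have h3 := hne z₀ hz₀ ζ hζ
      simp only [smul_eq_mul]
      field_simp
      ring
    rw [circleIntegral.integral_congr hR.le e1,
      circleIntegral.integral_sub (hIntsub _ _ _ hz' hz₀) (hIntsub _ _ _ hw' hz₀),
      circleIntegral.integral_sub (hInt _ _ hz') (hInt _ _ hz₀),
      circleIntegral.integral_sub (hInt _ _ hw') (hInt _ _ hz₀),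
      circleIntegral.integral_smul, circleIntegral.integral_smul,
      circleIntegral.integral_smul, circleIntegral.integral_smul,
      CF z hz', CF w hw', CF z₀ hz₀]
    simp only [smul_eq_mul]
    ring
  have hM0 : 0 ≤ M := le_trans (norm_nonneg _) (hM (z₀ + R) (by
    simp [mem_sphere, Complex.dist_eq, abs_of_pos hR]))
  -- norm bound on the integral
  set P : ℝ := ‖z - z₀‖ * ‖w - z₀‖ * ‖z - w‖ with hP
  have hP0 : 0 ≤ P := by positivity
  have bound : ‖∮ ζ in C(z₀, R),
      ((z - z₀) * (w - z₀) * (z - w) / ((ζ - z) * (ζ - w) * (ζ - z₀))) • f ζ‖ ≤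
      2 * π * R * (M * P / (R / 2 * (R / 2) * R)) := by
    apply circleIntegral.norm_integral_le_of_norm_le_const hR.le
    intro ζ hζ
    have d1 := hdist z hz ζ hζ
    have d2 := hdist w hw ζ hζ
    have d3 : ‖ζ - z₀‖ = R := by
      rw [← dist_eq_norm]; exact mem_sphere.mp hζ
    have hfζ := hM ζ hζ
    rw [norm_smul, norm_div]
    have hden : R / 2 * (R / 2) * R ≤ ‖(ζ - z) * (ζ - w) * (ζ - z₀)‖ := by
      rw [norm_mul, norm_mul, d3]
      have : (0:ℝ) < R / 2 := by linarith
      gcongr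
    have hnum : ‖(z - z₀) * (w - z₀) * (z - w)‖ = P := by
      rw [norm_mul, norm_mul]
    have hden0 : (0:ℝ) < R / 2 * (R / 2) * R := by positivity
    have hden0' : (0:ℝ) < ‖(ζ - z) * (ζ - w) * (ζ - z₀)‖ := lt_of_lt_of_le hden0 hden
    calc ‖(z - z₀) * (w - z₀) * (z - w)‖ / ‖(ζ - z) * (ζ - w) * (ζ - z₀)‖ * ‖f ζ‖
        ≤ P / (R / 2 * (R / 2) * R) * M := by
          rw [hnum]
          apply mul_le_mul _ hfζ (norm_nonneg _) (by positivity)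
          exact div_le_div_of_nonneg_left hP0 hden0 hden |>.trans_eq rfl |>.trans (le_refl _)
      _ = M * P / (R / 2 * (R / 2) * R) := by ring
  rw [key] at bound
  rw [norm_smul] at bound
  have h2pi : ‖(2 * π * I : ℂ)‖ = 2 * π := by
    simp [norm_mul, abs_of_pos Real.pi_pos, Complex.norm_I]
  rw [h2pi] at bound
  have hπ : (0:ℝ) < 2 * π := by positivity
  have : ‖(w - z₀) * (f z - f z₀) - (z - z₀) * (f w - f z₀)‖ ≤
      R * (M * P / (R / 2 * (R / 2) * R)) := by
    nlinarith [norm_nonneg ((w - z₀) * (f z - f z₀) - (z - z₀) * (f w - f z₀))]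
  calc ‖(w - z₀) * (f z - f z₀) - (z - z₀) * (f w - f z₀)‖
      ≤ R * (M * P / (R / 2 * (R / 2) * R)) := this
    _ = 4 * M / R ^ 2 * P := by field_simp; ring


/-- Weak holomorphy implies holomorphy in operator norm for families of
bounded operators: if `X, Y` are complex Banach spaces, `Ω ⊆ ℂ` is open,
and `D : ℂ → (X →L[ℂ] Y)` is such that `z ↦ g (D z u)` is holomorphic on
`Ω` for every `u ∈ X` and every continuous linear functional
`g : Y →L[ℂ] ℂ`, then `D` is complex-differentiable (with respect to the
operator norm) at every point of `Ω`. -/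
theorem weak_holomorphy_implies_holomorphy_operator
    (X : Type*) [NormedAddCommGroup X] [NormedSpace ℂ X] [CompleteSpace X]
    (Y : Type*) [NormedAddCommGroup Y] [NormedSpace ℂ Y] [CompleteSpace Y]
    (Ω : Set ℂ) (hΩ : IsOpen Ω) (D : ℂ → (X →L[ℂ] Y))
    (h : ∀ (u : X) (g : Y →L[ℂ] ℂ), ∀ z ∈ Ω,
      DifferentiableAt ℂ (fun z => g (D z u)) z) :
    ∀ z ∈ Ω, DifferentiableAt ℂ D z := by
  intro z₀ hz₀Ω
  obtain ⟨R, hR, hRΩ⟩ : ∃ R > 0, closedBall z₀ R ⊆ Ω := by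
    rcases Metric.isOpen_iff.mp hΩ z₀ hz₀Ω with ⟨ε, hε, hball⟩
    exact ⟨ε / 2, by linarith, (closedBall_subset_ball (by linarith)).trans hball⟩
  set K := closedBall z₀ R with hK
  have hKcpt : IsCompact K := isCompact_closedBall _ _
  -- continuity of scalarized maps on K
  have hcont : ∀ (u : X) (g : Y →L[ℂ] ℂ), ContinuousOn (fun ζ => g (D ζ u)) K :=
    fun u g ζ hζ => ((h u g ζ (hRΩ hζ)).continuousAt).continuousWithinAt
  -- pointwise (weak) bounds on K
  have hptwise : ∀ (u : X) (g : Y →L[ℂ] ℂ), ∃ C, ∀ ζ ∈ K, ‖g (D ζ u)‖ ≤ C := by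
    intro u g
    rcases hKcpt.exists_bound_of_continuousOn (hcont u g) with ⟨C, hC⟩
    exact ⟨C, hC⟩
  -- Banach–Steinhaus I : uniform bounds on ‖D ζ u‖ for ζ ∈ K
  have hbsu : ∀ u : X, ∃ C, ∀ ζ ∈ K, ‖D ζ u‖ ≤ C := by
    intro u
    have := banach_steinhaus (E := StrongDual ℂ Y) (F := ℂ)
      (g := fun ζ : K => NormedSpace.inclusionInDoubleDual ℂ Y (D ζ u)) ?_
    · rcases this with ⟨C, hC⟩
      refine ⟨C, fun ζ hζ => ?_⟩
      refine NormedSpace.norm_le_dual_bound ℂ _ ?_ (fun g => ?_)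
      · exact le_trans (norm_nonneg _) (hC ⟨ζ, hζ⟩)
      · calc ‖g (D ζ u)‖
            = ‖NormedSpace.inclusionInDoubleDual ℂ Y (D ζ u) g‖ := rfl
          _ ≤ ‖NormedSpace.inclusionInDoubleDual ℂ Y (D ζ u)‖ * ‖g‖ :=
              ContinuousLinearMap.le_opNorm _ _
          _ ≤ C * ‖g‖ := by
              have := hC ⟨ζ, hζ⟩
              exact mul_le_mul_of_nonneg_right this (norm_nonneg _)
    · intro g
      rcases hptwise u g with ⟨C, hC⟩
      exact ⟨C, fun ζ => hC ζ ζ.2⟩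
  -- Banach–Steinhaus II : uniform bound on ‖D ζ‖ for ζ ∈ K
  obtain ⟨M, hM⟩ : ∃ M, ∀ ζ ∈ K, ‖D ζ‖ ≤ M := by
    have := banach_steinhaus (E := X) (F := Y) (g := fun ζ : K => D ζ) ?_
    · rcases this with ⟨M, hMM⟩
      exact ⟨M, fun ζ hζ => hMM ⟨ζ, hζ⟩⟩
    · intro u
      rcases hbsu u with ⟨C, hC⟩
      exact ⟨C, fun ζ => hC ζ ζ.2⟩
  have hM0 : 0 ≤ M := le_trans (norm_nonneg _) (hM z₀ (mem_closedBall_self hR.le))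
  set C₀ : ℝ := 4 * M / R ^ 2 with hC₀
  have hC₀0 : 0 ≤ C₀ := by positivity
  -- key second-difference estimate at the operator level
  have hEst : ∀ z ∈ ball z₀ (R / 2), ∀ w ∈ ball z₀ (R / 2),
      ‖(w - z₀) • (D z - D z₀) - (z - z₀) • (D w - D z₀)‖ ≤
        C₀ * (‖z - z₀‖ * ‖w - z₀‖ * ‖z - w‖) := by
    intro z hz w hw
    set P : ℝ := ‖z - z₀‖ * ‖w - z₀‖ * ‖z - w‖ with hP
    have hP0 : 0 ≤ P := by positivity
    refine ContinuousLinearMap.opNorm_le_bound _ (by positivity) (fun u => ?_)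
    rw [show C₀ * P * ‖u‖ = (C₀ * P * ‖u‖) * 1 by ring]
    refine NormedSpace.norm_le_dual_bound ℂ _ (by positivity) (fun g => ?_)
    rw [mul_one]
    have happ : g ((((w - z₀) • (D z - D z₀) - (z - z₀) • (D w - D z₀))) u) =
        (w - z₀) * ((fun ζ => g (D ζ u)) z - (fun ζ => g (D ζ u)) z₀) -
        (z - z₀) * ((fun ζ => g (D ζ u)) w - (fun ζ => g (D ζ u)) z₀) := by
      simp only [ContinuousLinearMap.sub_apply, ContinuousLinearMap.smul_apply, map_sub,
        map_smul, smul_eq_mul]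
    rw [happ]
    have hsb : ∀ ζ ∈ sphere z₀ R, ‖g (D ζ u)‖ ≤ M * ‖u‖ * ‖g‖ := by
      intro ζ hζ
      calc ‖g (D ζ u)‖ ≤ ‖g‖ * ‖D ζ u‖ := g.le_opNorm _
        _ ≤ ‖g‖ * (‖D ζ‖ * ‖u‖) :=
            mul_le_mul_of_nonneg_left ((D ζ).le_opNorm u) (norm_nonneg g)
        _ ≤ ‖g‖ * (M * ‖u‖) := by
            have := hM ζ (sphere_subset_closedBall hζ)
            gcongr
        _ = M * ‖u‖ * ‖g‖ := by ring
    have := cauchy_three_aux (f := fun ζ => g (D ζ u)) hR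
      (fun x hx => h u g x (hRΩ hx)) hsb hz hw
    calc ‖(w - z₀) * ((fun ζ => g (D ζ u)) z - (fun ζ => g (D ζ u)) z₀) -
        (z - z₀) * ((fun ζ => g (D ζ u)) w - (fun ζ => g (D ζ u)) z₀)‖
        ≤ 4 * (M * ‖u‖ * ‖g‖) / R ^ 2 * (‖z - z₀‖ * ‖w - z₀‖ * ‖z - w‖) := this
      _ = C₀ * P * ‖u‖ * ‖g‖ := by rw [hC₀, hP]; ring
  -- difference quotients
  set Q : ℂ → (X →L[ℂ] Y) := fun z => (z - z₀)⁻¹ • (D z - D z₀) with hQ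
  have hQlip : ∀ z ∈ ball z₀ (R / 2), z ≠ z₀ → ∀ w ∈ ball z₀ (R / 2), w ≠ z₀ →
      ‖Q z - Q w‖ ≤ C₀ * ‖z - w‖ := by
    intro z hz hz0 w hw hw0
    have hz0' : z - z₀ ≠ 0 := sub_ne_zero.mpr hz0
    have hw0' : w - z₀ ≠ 0 := sub_ne_zero.mpr hw0
    have hid : ((z - z₀) * (w - z₀))⁻¹ •
        ((w - z₀) • (D z - D z₀) - (z - z₀) • (D w - D z₀)) = Q z - Q w := by
      have e1 : ((z - z₀) * (w - z₀))⁻¹ * (w - z₀) = (z - z₀)⁻¹ := by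
        field_simp
      have e2 : ((z - z₀) * (w - z₀))⁻¹ * (z - z₀) = (w - z₀)⁻¹ := by
        rw [mul_comm (z - z₀) (w - z₀)]
        field_simp
      simp only [hQ]
      rw [smul_sub, smul_smul, smul_smul, e1, e2]
    rw [← hid]
    have hb := hEst z hz w hw
    have h1 : 0 < ‖z - z₀‖ := norm_pos_iff.mpr hz0'
    have h2 : 0 < ‖w - z₀‖ := norm_pos_iff.mpr hw0'
    calc ‖((z - z₀) * (w - z₀))⁻¹ • ((w - z₀) • (D z - D z₀) - (z - z₀) • (D w - D z₀))‖
        = (‖z - z₀‖ * ‖w - z₀‖)⁻¹ *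
            ‖(w - z₀) • (D z - D z₀) - (z - z₀) • (D w - D z₀)‖ := by
          rw [norm_smul ((z - z₀) * (w - z₀))⁻¹
            ((w - z₀) • (D z - D z₀) - (z - z₀) • (D w - D z₀)), norm_inv, norm_mul]
      _ ≤ (‖z - z₀‖ * ‖w - z₀‖)⁻¹ * (C₀ * (‖z - z₀‖ * ‖w - z₀‖ * ‖z - w‖)) := by
          gcongr
      _ = C₀ * ‖z - w‖ := by
          rw [show (‖z - z₀‖ * ‖w - z₀‖)⁻¹ * (C₀ * (‖z - z₀‖ * ‖w - z₀‖ * ‖z - w‖)) =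
            C₀ * ‖z - w‖ * ((‖z - z₀‖ * ‖w - z₀‖)⁻¹ * (‖z - z₀‖ * ‖w - z₀‖)) by ring,
            inv_mul_cancel₀ (mul_pos h1 h2).ne', mul_one]
  -- a sequence tending to z₀ within the punctured ball
  set r : ℕ → ℝ := fun n => R / 4 / (n + 1) with hr
  set s : ℕ → ℂ := fun n => z₀ + (r n : ℂ) with hs
  have hrpos : ∀ n, 0 < r n := fun n => by positivity
  have hrle : ∀ n, r n ≤ R / 4 := by
    intro n
    rw [hr]
    have : (1:ℝ) ≤ (n:ℝ) + 1 := by push_cast; linarith [Nat.cast_nonneg (α := ℝ) n]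
    calc R / 4 / ((n:ℝ) + 1) ≤ R / 4 / 1 := by gcongr
      _ = R / 4 := by ring
  have hsball : ∀ n, s n ∈ ball z₀ (R / 2) := by
    intro n
    rw [mem_ball, hs, dist_eq_norm]
    simp only [add_sub_cancel_left]
    rw [Complex.norm_real, Real.norm_eq_abs, abs_of_pos (hrpos n)]
    linarith [hrle n, hR]
  have hsne : ∀ n, s n ≠ z₀ := by
    intro n hne
    have h0 : (r n : ℂ) = 0 := by
      have h1 : z₀ + (r n : ℂ) = z₀ := hne
      exact add_eq_left.mp h1
    exact (hrpos n).ne' (by exact_mod_cast h0)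
  have hsdist : ∀ n, ‖s n - z₀‖ = r n := by
    intro n
    rw [hs]
    simp only [add_sub_cancel_left]
    rw [Complex.norm_real, Real.norm_eq_abs, abs_of_pos (hrpos n)]
  have hrtend : Filter.Tendsto r Filter.atTop (nhds 0) := by
    rw [hr]
    have h1 : Filter.Tendsto (fun n : ℕ => ((n:ℝ) + 1)) Filter.atTop Filter.atTop :=
      Filter.tendsto_atTop_add_const_right _ 1 tendsto_natCast_atTop_atTop
    simpa using Filter.Tendsto.div_atTop (tendsto_const_nhds (x := R / 4)) h1
  have hstend : Filter.Tendsto s Filter.atTop (nhds z₀) := by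
    rw [hs]
    have : Filter.Tendsto (fun n => (r n : ℂ)) Filter.atTop (nhds (0:ℂ)) := by
      have := (Complex.continuous_ofReal.tendsto 0).comp hrtend
      exact this
    simpa using tendsto_const_nhds.add this
  -- the sequence of difference quotients is Cauchy
  have hcauchy : CauchySeq (fun n => Q (s n)) := by
    refine cauchySeq_of_le_tendsto_0 (fun N => C₀ * (2 * (R / 4 / (N + 1))))
      (fun n m N hn hm => ?_) ?_
    · 
      rw [dist_eq_norm]
      calc ‖Q (s n) - Q (s m)‖ ≤ C₀ * ‖s n - s m‖ :=
            hQlip (s n) (hsball n) (hsne n) (s m) (hsball m) (hsne m)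
        _ ≤ C₀ * (2 * (R / 4 / (N + 1))) := by
            have h1 : ‖s n - s m‖ ≤ ‖s n - z₀‖ + ‖s m - z₀‖ := by
              have he : s n - s m = (s n - z₀) - (s m - z₀) := by ring
              rw [he]
              exact norm_sub_le _ _
            have h2 : r n ≤ r m ⊔ r n := le_max_right _ _
            have hrN : ∀ k, N ≤ k → r k ≤ R / 4 / (N + 1) := by
              intro k hk
              show R / 4 / ((k:ℝ) + 1) ≤ R / 4 / ((N:ℝ) + 1)
              have hk' : (N:ℝ) + 1 ≤ (k:ℝ) + 1 := by
                have : (N:ℝ) ≤ (k:ℝ) := by exact_mod_cast hk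
                linarith
              gcongr
              all_goals linarith [Nat.cast_nonneg (α := ℝ) N]
            have := hrN n hn
            have := hrN m hm
            rw [hsdist n, hsdist m] at h1
            have : ‖s n - s m‖ ≤ 2 * (R / 4 / (N + 1)) := by
              calc ‖s n - s m‖ ≤ r n + r m := h1
                _ ≤ 2 * (R / 4 / (N + 1)) := by linarith [hrN n hn, hrN m hm]
            gcongr
    · have : Filter.Tendsto (fun N : ℕ => R / 4 / ((N:ℝ) + 1)) Filter.atTop (nhds 0) :=
        hrtend
      simpa using (this.const_mul 2).const_mul C₀
  obtain ⟨A, hA⟩ := cauchySeq_tendsto_of_complete hcauchy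
  -- bound on ‖Q z - A‖
  have hQA : ∀ z ∈ ball z₀ (R / 2), z ≠ z₀ → ‖Q z - A‖ ≤ C₀ * ‖z - z₀‖ := by
    intro z hz hz0
    have ht1 : Filter.Tendsto (fun n => ‖Q z - Q (s n)‖) Filter.atTop
        (nhds ‖Q z - A‖) := ((tendsto_const_nhds.sub hA).norm)
    have ht2 : Filter.Tendsto (fun n => C₀ * ‖z - s n‖) Filter.atTop
        (nhds (C₀ * ‖z - z₀‖)) := (((tendsto_const_nhds.sub hstend).norm).const_mul C₀)
    refine le_of_tendsto_of_tendsto' ht1 ht2 (fun n => ?_)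
    exact hQlip z hz hz0 (s n) (hsball n) (hsne n)
  -- conclude differentiability
  have hderiv : HasDerivAt D A z₀ := by
    rw [hasDerivAt_iff_isLittleO]
    rw [Asymptotics.isLittleO_iff]
    intro c hc
    have hRc : 0 < min (R / 2) (c / (C₀ + 1)) := by
      apply lt_min (by linarith)
      positivity
    filter_upwards [Metric.ball_mem_nhds z₀ hRc] with z hz
    rcases eq_or_ne z z₀ with rfl | hz0
    · simp
    · have hzball : z ∈ ball z₀ (R / 2) :=
        mem_ball.mpr (lt_of_lt_of_le (mem_ball.mp hz) (min_le_left _ _))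
      have hzc : ‖z - z₀‖ < c / (C₀ + 1) := by
        rw [← dist_eq_norm]
        exact lt_of_lt_of_le (mem_ball.mp hz) (min_le_right _ _)
      have hz0' : z - z₀ ≠ 0 := sub_ne_zero.mpr hz0
      have hid : D z - D z₀ - (z - z₀) • A = (z - z₀) • (Q z - A) := by
        rw [smul_sub, hQ]
        rw [smul_inv_smul₀ hz0']
      calc ‖D z - D z₀ - (z - z₀) • A‖ = ‖z - z₀‖ * ‖Q z - A‖ := by
            rw [hid]
            exact norm_smul (z - z₀) (Q z - A)
        _ ≤ ‖z - z₀‖ * (C₀ * ‖z - z₀‖) := by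
            gcongr
            exact hQA z hzball hz0
        _ ≤ ‖z - z₀‖ * (C₀ * (c / (C₀ + 1))) :=
            mul_le_mul_of_nonneg_left
              (mul_le_mul_of_nonneg_left hzc.le hC₀0) (norm_nonneg _)
        _ ≤ ‖z - z₀‖ * c := by
            have hfrac : C₀ * (c / (C₀ + 1)) ≤ c := by
              rw [mul_div_assoc', div_le_iff₀ (by linarith : (0:ℝ) < C₀ + 1)]
              nlinarith [hc.le, hC₀0]
            exact mul_le_mul_of_nonneg_left hfrac (norm_nonneg _)
        _ = c * ‖z - z₀‖ := mul_comm _ _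
  exact hderiv.differentiableAt
end
end
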